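/- arXiv:2204.05914 — 4 statements merged into one kernel-verified Lean document; each statement's English description precedes it below -/
import Mathlib

section
/- Let M be a matroid on a finite ground set E, let L be a nonempty upper-set of proper flats of M, and let F_0 be a minimal element of L. Then x_{F_0} is a decomposing vertex of Δ_M(L): the deletion del_{Δ_M(L)}(x_{F_0}) and the link link_{Δ_M(L)}(x_{F_0}) are both vertex decomposable, and every facet of del_{Δ_M(L)}(x_{F_0}) is a facet of Δ_M(L). -/
open Finset

/-! ## Simplicial complexes as downward-relevant families of finite faces -/

section Complexes

variable {V : Type*} {W : Type*}

/-- A facet of a complex (given by its set of faces) is a maximal face. -/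
def IsFacet (Δ : Set (Finset V)) (s : Finset V) : Prop :=
  s ∈ Δ ∧ ∀ t ∈ Δ, s ⊆ t → s = t

/-- The deletion of a vertex `v`: all faces not containing `v`. -/
def faceDeletion (Δ : Set (Finset V)) (v : V) : Set (Finset V) :=
  {s ∈ Δ | v ∉ s}

/-- The link of a vertex `v`: faces `τ \ {v}` for `v ∈ τ ∈ Δ`. -/
def faceLink [DecidableEq V] (Δ : Set (Finset V)) (v : V) : Set (Finset V) :=
  {s | v ∉ s ∧ insert v s ∈ Δ}

/-- Vertex decomposability: `Δ` is a simplex (the family of all subsets of one finite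
set, including the case `{∅}`), or it has a vertex `v` whose deletion and link are vertex
decomposable and such that every facet of the deletion is a facet of `Δ`. -/
inductive IsVertexDecomposable [DecidableEq V] : Set (Finset V) → Prop
  | simplex (s : Finset V) : IsVertexDecomposable {t | t ⊆ s}
  | step (Δ : Set (Finset V)) (v : V) :
      {v} ∈ Δ →
      IsVertexDecomposable (faceDeletion Δ v) →
      IsVertexDecomposable (faceLink Δ v) →
      (∀ s, IsFacet (faceDeletion Δ v) s → IsFacet Δ s) →
      IsVertexDecomposable Δ

/-- A family of faces is pure of dimension `d` if it is nonempty and all of its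
maximal elements have cardinality `d + 1`. -/
def IsPureDim (Δ : Set (Finset V)) (d : ℤ) : Prop :=
  Δ.Nonempty ∧ ∀ s, IsFacet Δ s → (s.card : ℤ) = d + 1

/-- `l` is a shelling order of `Δ`: it enumerates the facets of `Δ` without repetition,
and for every `i ≥ 1` the complex `⟨σ₀, …, σ_{i-1}⟩ ∩ ⟨σ_i⟩` is pure of dimension
`dim σ_i - 1 = |σ_i| - 2`. -/
def IsShelling (Δ : Set (Finset V)) (l : List (Finset V)) : Prop :=
  l.Nodup ∧ (∀ s, s ∈ l ↔ IsFacet Δ s) ∧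
  ∀ (i : ℕ) (hi : i < l.length), 0 < i →
    IsPureDim ({t | ∃ s ∈ l.take i, t ⊆ s} ∩ {t | t ⊆ l[i]})
      ((l[i].card : ℤ) - 2)

/-- A complex is shellable if it admits a shelling order of its facets. -/
def Shellable (Δ : Set (Finset V)) : Prop := ∃ l, IsShelling Δ l

/-- The join of two complexes, realized on the sum of the two vertex types. -/
def complexJoin [DecidableEq V] [DecidableEq W]
    (Δ : Set (Finset V)) (Γ : Set (Finset W)) : Set (Finset (V ⊕ W)) :=
  {s | ∃ a ∈ Δ, ∃ b ∈ Γ, s = a.image Sum.inl ∪ b.image Sum.inr}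

/-- An isomorphism of simplicial complexes: a vertex map which is injective on every
face and induces a bijection between the two families of faces. -/
def ComplexIso [DecidableEq W] (Δ : Set (Finset V)) (Γ : Set (Finset W)) : Prop :=
  ∃ φ : V → W,
    (∀ s ∈ Δ, Set.InjOn φ ↑s) ∧
    (∀ s ∈ Δ, s.image φ ∈ Γ) ∧
    (∀ s t, s ∈ Δ → t ∈ Δ → s.image φ = t.image φ → s = t) ∧
    (∀ t ∈ Γ, ∃ s ∈ Δ, s.image φ = t)

/-- The property of appearing as an initial segment: any entry of `l` earlier than an
entry satisfying `P` also satisfies `P`. -/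
def PrefixProp {α : Type*} (l : List α) (P : α → Prop) : Prop :=
  ∀ (i j : ℕ) (hi : i < l.length) (hj : j < l.length), i < j → P l[j] → P l[i]

/-- The property of appearing as a final segment: any entry of `l` later than an
entry satisfying `P` also satisfies `P`. -/
def SuffixProp {α : Type*} (l : List α) (P : α → Prop) : Prop :=
  ∀ (i j : ℕ) (hi : i < l.length) (hj : j < l.length), i < j → P l[i] → P l[j]

/-- `a` appears strictly before `b` in the list `l`. -/
def ListPrec {α : Type*} (l : List α) (a b : α) : Prop :=
  ∃ (i j : ℕ) (hi : i < l.length) (hj : j < l.length), i < j ∧ l[i] = a ∧ l[j] = b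

/-- The h-polynomial of a (finite) complex `Δ`, via
`h(Δ,t) = ∑_{s ∈ Δ} t^{|s|} (1-t)^{(d+1)-|s|}` where `d = dim Δ`. -/
noncomputable def hPoly {V : Type*} [Fintype V] [DecidableEq V]
    (Δ : Set (Finset V)) : Polynomial ℤ :=
  ∑ s ∈ Δ.toFinite.toFinset,
    Polynomial.X ^ s.card *
      (1 - Polynomial.X) ^ (Δ.toFinite.toFinset.sup Finset.card - s.card)

end Complexes

/-! ## Closure operators -/

/-- A closure operator on the finite set `E`. -/
structure ClosureOp (E : Type*) [Fintype E] [DecidableEq E] where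
  cl : Finset E → Finset E
  subset_cl : ∀ A, A ⊆ cl A
  cl_mono : ∀ ⦃A B : Finset E⦄, A ⊆ B → cl A ⊆ cl B
  cl_idem : ∀ A, cl (cl A) = cl A

namespace ClosureOp

variable {E : Type*} [Fintype E] [DecidableEq E]

/-- A flat of `f` is a closed set. -/
def IsFlat (f : ClosureOp E) (F : Finset E) : Prop := f.cl F = F

/-- A proper flat of `f` is a flat different from the whole ground set. -/
def IsProperFlat (f : ClosureOp E) (F : Finset E) : Prop :=
  f.cl F = F ∧ F ≠ Finset.univ

/-- `I` is independent for `f` if removing any of its elements strictly shrinks its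
closure. -/
def Indep (f : ClosureOp E) (I : Finset E) : Prop :=
  ∀ i ∈ I, f.cl (I.erase i) ⊂ f.cl I

/-- A basis is an independent set whose closure is all of `E`. -/
def IsBasis (f : ClosureOp E) (I : Finset E) : Prop :=
  f.Indep I ∧ f.cl I = Finset.univ

/-- The independence complex of `f`: faces are the independent sets. -/
def indepComplex (f : ClosureOp E) : Set (Finset E) := {I | f.Indep I}

/-- The Bergman complex of `f`: faces are chains of proper flats strictly between
`f(∅)` and `E`. A vertex `x_F` is represented by the flat `F` itself. -/
def bergman (f : ClosureOp E) : Set (Finset (Finset E)) :=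
  {C | (∀ F ∈ C, f.IsProperFlat F ∧ f.cl ∅ ⊂ F) ∧
       (∀ F ∈ C, ∀ G ∈ C, F ⊆ G ∨ G ⊆ F)}

/-- The cone over the Bergman complex of `f`: chains of proper flats, where the
bottom flat `f(∅)` is allowed as a member. -/
def coneBergman (f : ClosureOp E) : Set (Finset (Finset E)) :=
  {C | (∀ F ∈ C, f.IsProperFlat F) ∧
       (∀ F ∈ C, ∀ G ∈ C, F ⊆ G ∨ G ⊆ F)}

/-- The augmented Bergman complex of `f`, on the vertex set
`{y_i : i ∈ E} ⊔ {x_F : F a proper flat}`; here `y_i = Sum.inl i` and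
`x_F = Sum.inr F`.  Faces consist of an independent set `I` together with a chain of
proper flats all containing `f(I)`. -/
def augBergman (f : ClosureOp E) : Set (Finset (E ⊕ Finset E)) :=
  {s | ∃ (I : Finset E) (C : Finset (Finset E)),
    s = I.image Sum.inl ∪ C.image Sum.inr ∧
    f.Indep I ∧
    (∀ F ∈ C, f.IsProperFlat F) ∧
    (∀ F ∈ C, ∀ G ∈ C, F ⊆ G ∨ G ⊆ F) ∧
    (∀ F ∈ C, f.cl I ⊆ F)}

/-- An upper-set of proper flats of `f`. -/
def IsFlatUpperSet (f : ClosureOp E) (L : Set (Finset E)) : Prop :=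
  (∀ F ∈ L, f.IsProperFlat F) ∧
  ∀ F ∈ L, ∀ F', f.IsProperFlat F' → F ⊆ F' → F' ∈ L

/-- The induced subcomplex of the augmented Bergman complex on the vertex set
`{y_i : i ∈ E} ⊔ {x_F : F ∈ L}`. -/
def augBergmanOn (f : ClosureOp E) (L : Set (Finset E)) :
    Set (Finset (E ⊕ Finset E)) :=
  {s | s ∈ f.augBergman ∧ ∀ F : Finset E, Sum.inr F ∈ s → F ∈ L}

/-- The restriction `f|_F` of a closure operator to `F`, as a closure operator on the
subtype `{x // x ∈ F}`; when `F` is a flat, `(f|_F)(A) = f(A)`. -/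
def restrict (f : ClosureOp E) (F : Finset E) : ClosureOp {x // x ∈ F} where
  cl A := (f.cl (A.image Subtype.val)).subtype (· ∈ F)
  subset_cl A a ha := by
    rw [Finset.mem_subtype]
    exact f.subset_cl _ (Finset.mem_image_of_mem _ ha)
  cl_mono A B h a ha := by
    rw [Finset.mem_subtype] at *
    exact f.cl_mono (Finset.image_subset_image h) ha
  cl_idem A := by
    have key : ∀ s : Finset E,
        ((s.subtype (· ∈ F)).image Subtype.val) = s.filter (· ∈ F) := by
      intro s
      ext x
      simp [Finset.mem_subtype, Finset.mem_image, Finset.mem_filter, Subtype.exists,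
        and_comm]
    ext a
    rw [Finset.mem_subtype, Finset.mem_subtype, key]
    constructor
    · intro hx
      have h1 : f.cl ((f.cl (A.image Subtype.val)).filter (· ∈ F))
          ⊆ f.cl (A.image Subtype.val) := by
        have := f.cl_mono (Finset.filter_subset (· ∈ F) (f.cl (A.image Subtype.val)))
        rw [f.cl_idem] at this
        exact this
      exact h1 hx
    · intro hx
      refine f.cl_mono ?_ hx
      intro x hxA
      rw [Finset.mem_filter]
      obtain ⟨a', _, rfl⟩ := Finset.mem_image.mp hxA
      exact ⟨f.subset_cl _ hxA, a'.2⟩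

/-- The contraction `f/F` of a closure operator by `F`, as a closure operator on the
subtype `{x // x ∉ F}`; it is given by `(f/F)(A) = f(A ∪ F) \ F`. -/
def contract (f : ClosureOp E) (F : Finset E) : ClosureOp {x // x ∉ F} where
  cl A := (f.cl (A.image Subtype.val ∪ F)).subtype (· ∉ F)
  subset_cl A a ha := by
    rw [Finset.mem_subtype]
    exact f.subset_cl _ (Finset.mem_union_left _ (Finset.mem_image_of_mem _ ha))
  cl_mono A B h a ha := by
    rw [Finset.mem_subtype] at *
    exact f.cl_mono (Finset.union_subset_union_left (Finset.image_subset_image h)) ha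
  cl_idem A := by
    have key : ∀ s : Finset E,
        ((s.subtype (· ∉ F)).image Subtype.val) = s.filter (· ∉ F) := by
      intro s
      ext x
      simp [Finset.mem_subtype, Finset.mem_image, Finset.mem_filter, Subtype.exists,
        and_comm]
    set s := f.cl (A.image Subtype.val ∪ F) with hs
    have hFs : F ⊆ s := fun x hx => f.subset_cl _ (Finset.mem_union_right _ hx)
    have hmain : f.cl ((s.subtype (· ∉ F)).image Subtype.val ∪ F) = s := by
      rw [key]
      apply le_antisymm
      · have h1 : s.filter (· ∉ F) ∪ F ⊆ s :=
          Finset.union_subset (Finset.filter_subset _ _) hFs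
        have := f.cl_mono h1
        rw [hs, f.cl_idem] at this
        exact this
      · refine f.cl_mono ?_
        intro x hx
        rcases Finset.mem_union.mp hx with hx' | hx'
        · obtain ⟨a', _, rfl⟩ := Finset.mem_image.mp hx'
          by_cases hxF : (a' : E) ∈ F
          · exact Finset.mem_union_right _ hxF
          · exact Finset.mem_union_left _
              (Finset.mem_filter.mpr ⟨f.subset_cl _ (Finset.mem_union_left _ hx'), hxF⟩)
        · exact Finset.mem_union_right _ hx'
    ext a
    rw [Finset.mem_subtype, Finset.mem_subtype, hmain]

end ClosureOp

/-! ## Matroids and their closure operators -/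

/-- The closure operator (on finsets) of a matroid whose ground set is all of the
finite type `E`. -/
noncomputable def Matroid.closureOp {E : Type*} [Fintype E] [DecidableEq E]
    (M : Matroid E) (hE : M.E = Set.univ) : ClosureOp E where
  cl A := (M.closure ↑A).toFinite.toFinset
  subset_cl A := by
    intro a ha
    simp only [Set.Finite.mem_toFinset]
    exact M.subset_closure (↑A) (by simp [hE]) ha
  cl_mono A B h := by
    intro a ha
    simp only [Set.Finite.mem_toFinset] at *
    exact M.closure_subset_closure (Finset.coe_subset.mpr h) ha
  cl_idem A := by
    ext a
    simp only [Set.Finite.mem_toFinset, Set.Finite.coe_toFinset]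
    rw [M.closure_closure]

/-! ## The flag-to-basis order on facets of the augmented Bergman complex -/

namespace ClosureOp

variable {E : Type*} [Fintype E] [DecidableEq E]

/-- The independent-set part `I` of a face of the augmented Bergman complex. -/
noncomputable def faceIndep (s : Finset (E ⊕ Finset E)) : Finset E :=
  s.preimage Sum.inl Sum.inl_injective.injOn

/-- The flag part `F_•` of a face of the augmented Bergman complex. -/
noncomputable def faceFlag (s : Finset (E ⊕ Finset E)) : Finset (Finset E) :=
  s.preimage Sum.inr Sum.inr_injective.injOn

/-- The flag part of a facet with its minimal flat `f(I)` removed, regarded as a face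
of the Bergman complex of the contraction `f / f(I)`: each flat `G` of the flag is
sent to the flat `G \ f(I)` of the contraction. -/
noncomputable def reducedFlag (f : ClosureOp E) (s : Finset (E ⊕ Finset E)) : Finset (Finset E) :=
  ((faceFlag s).erase (f.cl (faceIndep s))).image (fun G => G \ f.cl (faceIndep s))

/-- The flag-to-basis order `≺` on facets of the augmented Bergman complex, relative
to a linear extension `r` of the independence complex and a fixed family `sh` of
shellings of the Bergman complexes of the contractions `f/F`.  Facets with nonempty
flag are compared first by `r` on their independent parts, then (for equal independent
parts) by the position of their reduced flags in the fixed shelling `sh (f.cl I)`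
(whose faces are mapped down to `Finset E` level by taking images of `Subtype.val`);
facets with empty flag (bases) come after all facets with nonempty flag. -/
def augPrec (f : ClosureOp E) (r : Finset E → Finset E → Prop)
    (sh : (F : Finset E) → List (Finset (Finset {x // x ∉ F})))
    (s t : Finset (E ⊕ Finset E)) : Prop :=
  ((faceFlag s).Nonempty ∧ (faceFlag t).Nonempty ∧
    (r (faceIndep s) (faceIndep t) ∨
      (faceIndep s = faceIndep t ∧
        ListPrec ((sh (f.cl (faceIndep s))).map
            (fun c => c.image (fun G => G.image Subtype.val)))
          (f.reducedFlag s) (f.reducedFlag t)))) ∨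
  ((faceFlag s).Nonempty ∧ faceFlag t = ∅)

end ClosureOp



/-! ## Auxiliary theory -/

section AuxA

variable {V : Type*} {W : Type*} [DecidableEq V] [DecidableEq W]

lemma vd_empty_mem {Δ : Set (Finset V)} (h : IsVertexDecomposable Δ) : ∅ ∈ Δ := by
  induction h with
  | simplex s => simp only [Set.mem_setOf_eq]; exact Finset.empty_subset s
  | step Δ v hv hdel hlink hfac ihdel ihlink => exact ihdel.1

lemma vd_singleton_empty : IsVertexDecomposable ({∅} : Set (Finset V)) := by
  have h : ({∅} : Set (Finset V)) = {t | t ⊆ (∅ : Finset V)} := by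
    ext t; simp [Finset.subset_empty]
  rw [h]; exact IsVertexDecomposable.simplex ∅

/-- image of a complex under a vertex map -/
def imageCpx (ι : V → W) (Δ : Set (Finset V)) : Set (Finset W) :=
  {t | ∃ s ∈ Δ, t = s.image ι}

lemma mem_imageCpx {ι : V → W} {Δ : Set (Finset V)} {t : Finset W} :
    t ∈ imageCpx ι Δ ↔ ∃ s ∈ Δ, t = s.image ι := Iff.rfl

lemma isFacet_image {ι : V → W} (hι : Function.Injective ι) {Δ : Set (Finset V)}
    {s : Finset V} (hs : IsFacet Δ s) : IsFacet (imageCpx ι Δ) (s.image ι) := by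
  refine ⟨⟨s, hs.1, rfl⟩, ?_⟩
  rintro t ⟨u, hu, rfl⟩ hsub
  rw [Finset.image_subset_image_iff hι] at hsub
  rw [hs.2 u hu hsub]

lemma vd_image {ι : V → W} (hι : Function.Injective ι) {Δ : Set (Finset V)}
    (h : IsVertexDecomposable Δ) : IsVertexDecomposable (imageCpx ι Δ) := by
  induction h with
  | simplex s =>
      have he : imageCpx ι {t | t ⊆ s} = {t | t ⊆ s.image ι} := by
        ext t
        constructor
        · rintro ⟨u, hu, rfl⟩; exact Finset.image_subset_image hu
        · intro ht
          refine ⟨s.filter (fun x => ι x ∈ t), Finset.filter_subset _ _, ?_⟩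
          ext y
          simp only [Finset.mem_image, Finset.mem_filter]
          constructor
          · intro hy
            obtain ⟨x, hx, rfl⟩ := Finset.mem_image.1 (ht hy)
            exact ⟨x, ⟨hx, hy⟩, rfl⟩
          · rintro ⟨x, ⟨hx, hxt⟩, rfl⟩; exact hxt
      rw [he]; exact IsVertexDecomposable.simplex _
  | step Δ v hv hdel hlink hfac ihdel ihlink =>
      have hdelE : faceDeletion (imageCpx ι Δ) (ι v) = imageCpx ι (faceDeletion Δ v) := by
        ext t
        constructor
        · rintro ⟨⟨u, hu, rfl⟩, hvt⟩
          refine ⟨u, ⟨hu, fun hvu => hvt (Finset.mem_image_of_mem ι hvu)⟩, rfl⟩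
        · rintro ⟨u, ⟨hu, hvu⟩, rfl⟩
          refine ⟨⟨u, hu, rfl⟩, fun hvt => ?_⟩
          obtain ⟨x, hx, hxe⟩ := Finset.mem_image.1 hvt
          exact hvu (hι hxe ▸ hx)
      have hlinkE : faceLink (imageCpx ι Δ) (ι v) = imageCpx ι (faceLink Δ v) := by
        ext t
        constructor
        · rintro ⟨hvt, u, hu, he⟩
          have hvu : v ∈ u := by
            have : ι v ∈ u.image ι := he ▸ Finset.mem_insert_self _ _
            obtain ⟨x, hx, hxe⟩ := Finset.mem_image.1 this
            exact hι hxe ▸ hx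
          refine ⟨u.erase v, ⟨Finset.notMem_erase _ _, by
            rwa [Finset.insert_erase hvu]⟩, ?_⟩
          rw [Finset.image_erase hι, ← he, Finset.erase_insert hvt]
        · rintro ⟨u, ⟨hvu, hins⟩, rfl⟩
          refine ⟨fun hvt => ?_, insert v u, hins, ?_⟩
          · obtain ⟨x, hx, hxe⟩ := Finset.mem_image.1 hvt
            exact hvu (hι hxe ▸ hx)
          · rw [Finset.image_insert]
      refine IsVertexDecomposable.step _ (ι v) ?_ ?_ ?_ ?_
      · exact ⟨{v}, hv, by rw [Finset.image_singleton]⟩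
      · rw [hdelE]; exact ihdel
      · rw [hlinkE]; exact ihlink
      · intro t ht
        rw [hdelE] at ht
        obtain ⟨u, hu, rfl⟩ := mem_imageCpx.1 ht.1
        have hufac : IsFacet (faceDeletion Δ v) u := by
          refine ⟨hu, fun w hw hsub => ?_⟩
          have himg : u.image ι = w.image ι := by
            exact ht.2 (w.image ι) ⟨w, hw, rfl⟩ (Finset.image_subset_image hsub)
          exact Finset.image_injective hι himg
        exact isFacet_image hι (hfac u hufac)

/-! ### Joins -/

def joinOn (P : V → Prop) [DecidablePred P] (A B : Set (Finset V)) : Set (Finset V) :=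
  {s | s.filter P ∈ A ∧ s.filter (fun x => ¬ P x) ∈ B}

section JoinLemmas

variable {P : V → Prop} [DecidablePred P] {A B : Set (Finset V)}

lemma mem_joinOn {s : Finset V} :
    s ∈ joinOn P A B ↔ s.filter P ∈ A ∧ s.filter (fun x => ¬ P x) ∈ B := Iff.rfl

lemma mem_faceDeletion {Δ : Set (Finset V)} {v : V} {s : Finset V} :
    s ∈ faceDeletion Δ v ↔ s ∈ Δ ∧ v ∉ s := Iff.rfl

lemma mem_faceLink {Δ : Set (Finset V)} {v : V} {s : Finset V} :
    s ∈ faceLink Δ v ↔ v ∉ s ∧ insert v s ∈ Δ := Iff.rfl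

lemma join_del_left {v : V} (hPv : P v) :
    faceDeletion (joinOn P A B) v = joinOn P (faceDeletion A v) B := by
  ext s
  simp only [mem_faceDeletion, mem_joinOn]
  constructor
  · rintro ⟨⟨h1, h2⟩, hv⟩
    exact ⟨⟨h1, fun hc => hv (Finset.mem_of_mem_filter _ hc)⟩, h2⟩
  · rintro ⟨⟨h1, hv⟩, h2⟩
    exact ⟨⟨h1, h2⟩, fun hc => hv (Finset.mem_filter.2 ⟨hc, hPv⟩)⟩

lemma join_del_right {v : V} (hPv : ¬ P v) :
    faceDeletion (joinOn P A B) v = joinOn P A (faceDeletion B v) := by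
  ext s
  simp only [mem_faceDeletion, mem_joinOn]
  constructor
  · rintro ⟨⟨h1, h2⟩, hv⟩
    exact ⟨h1, h2, fun hc => hv (Finset.mem_of_mem_filter _ hc)⟩
  · rintro ⟨h1, h2, hv⟩
    exact ⟨⟨h1, h2⟩, fun hc => hv (Finset.mem_filter.2 ⟨hc, hPv⟩)⟩

lemma join_link_left {v : V} (hPv : P v) :
    faceLink (joinOn P A B) v = joinOn P (faceLink A v) B := by
  ext s
  simp only [mem_faceLink, mem_joinOn, Finset.filter_insert, if_pos hPv,
    if_neg (not_not_intro hPv)]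
  constructor
  · rintro ⟨hv, h1, h2⟩
    exact ⟨⟨fun hc => hv (Finset.mem_of_mem_filter _ hc), h1⟩, h2⟩
  · rintro ⟨⟨hv, h1⟩, h2⟩
    exact ⟨fun hc => hv (Finset.mem_filter.2 ⟨hc, hPv⟩), h1, h2⟩

lemma join_link_right {v : V} (hPv : ¬ P v) :
    faceLink (joinOn P A B) v = joinOn P A (faceLink B v) := by
  ext s
  simp only [mem_faceLink, mem_joinOn, Finset.filter_insert, if_pos hPv,
    if_neg hPv]
  constructor
  · rintro ⟨hv, h1, h2⟩
    exact ⟨h1, fun hc => hv (Finset.mem_of_mem_filter _ hc), h2⟩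
  · rintro ⟨h1, hv, h2⟩
    exact ⟨fun hc => hv (Finset.mem_filter.2 ⟨hc, hPv⟩), h1, h2⟩

lemma join_facet_iff (hA : ∀ a ∈ A, ∀ x ∈ a, P x) (hB : ∀ b ∈ B, ∀ x ∈ b, ¬ P x)
    {s : Finset V} :
    IsFacet (joinOn P A B) s ↔
      IsFacet A (s.filter P) ∧ IsFacet B (s.filter (fun x => ¬ P x)) := by
  constructor
  · intro hs
    obtain ⟨hmem, hmax⟩ := hs
    rw [mem_joinOn] at hmem
    constructor
    · refine ⟨hmem.1, fun a ha hsub => ?_⟩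
      have hta : (a ∪ s.filter (fun x => ¬ P x)) ∈ joinOn P A B := by
        rw [mem_joinOn, Finset.filter_union, Finset.filter_union,
          Finset.filter_true_of_mem (hA a ha),
          Finset.filter_false_of_mem (fun x hx => (Finset.mem_filter.1 hx).2),
          Finset.filter_false_of_mem (fun x hx => not_not_intro (hA a ha x hx)),
          Finset.filter_true_of_mem (fun x hx => (Finset.mem_filter.1 hx).2),
          Finset.union_empty, Finset.empty_union]
        exact ⟨ha, hmem.2⟩
      have hst : s ⊆ a ∪ s.filter (fun x => ¬ P x) := by
        conv_lhs => rw [← Finset.filter_union_filter_not_eq (p := P) s]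
        exact Finset.union_subset_union hsub (Finset.Subset.refl _)
      have := hmax _ hta hst
      rw [this, Finset.filter_union, Finset.filter_true_of_mem (hA a ha),
        Finset.filter_false_of_mem (fun x hx => (Finset.mem_filter.1 hx).2),
        Finset.union_empty]
    · refine ⟨hmem.2, fun b hb hsub => ?_⟩
      have htb : (s.filter P ∪ b) ∈ joinOn P A B := by
        rw [mem_joinOn, Finset.filter_union, Finset.filter_union,
          Finset.filter_true_of_mem (fun x hx => (Finset.mem_filter.1 hx).2),
          Finset.filter_false_of_mem (hB b hb),
          Finset.filter_false_of_mem (fun x hx => not_not_intro ((Finset.mem_filter.1 hx).2)),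
          Finset.filter_true_of_mem (hB b hb),
          Finset.union_empty, Finset.empty_union]
        exact ⟨hmem.1, hb⟩
      have hst : s ⊆ s.filter P ∪ b := by
        conv_lhs => rw [← Finset.filter_union_filter_not_eq (p := P) s]
        exact Finset.union_subset_union (Finset.Subset.refl _) hsub
      have := hmax _ htb hst
      rw [this, Finset.filter_union,
        Finset.filter_false_of_mem (fun x hx => not_not_intro ((Finset.mem_filter.1 hx).2)),
        Finset.filter_true_of_mem (hB b hb), Finset.empty_union]
  · rintro ⟨⟨hA1, hA2⟩, ⟨hB1, hB2⟩⟩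
    refine ⟨mem_joinOn.2 ⟨hA1, hB1⟩, fun t ht hsub => ?_⟩
    rw [mem_joinOn] at ht
    have e1 : s.filter P = t.filter P :=
      hA2 _ ht.1 (Finset.filter_subset_filter _ hsub)
    have e2 : s.filter (fun x => ¬ P x) = t.filter (fun x => ¬ P x) :=
      hB2 _ ht.2 (Finset.filter_subset_filter _ hsub)
    calc s = s.filter P ∪ s.filter (fun x => ¬ P x) :=
            (Finset.filter_union_filter_not_eq (p := P) s).symm
      _ = t.filter P ∪ t.filter (fun x => ¬ P x) := by rw [e1, e2]
      _ = t := Finset.filter_union_filter_not_eq (p := P) t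

lemma vd_join_simplex (sa : Finset V) (hsa : ∀ x ∈ sa, P x) :
    ∀ {B : Set (Finset V)}, IsVertexDecomposable B → (∀ b ∈ B, ∀ x ∈ b, ¬ P x) →
      IsVertexDecomposable (joinOn P {t | t ⊆ sa} B) := by
  have hsuppA : ∀ a ∈ {t : Finset V | t ⊆ sa}, ∀ x ∈ a, P x :=
    fun a ha x hx => hsa x (ha hx)
  intro B hVD
  induction hVD with
  | simplex sb =>
    intro hB
    have he : joinOn P {t | t ⊆ sa} {t | t ⊆ sb} = {t | t ⊆ sa ∪ sb} := by
      ext s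
      rw [mem_joinOn]
      constructor
      · rintro ⟨h1, h2⟩ x hx
        by_cases hPx : P x
        · exact Finset.mem_union_left _ (h1 (Finset.mem_filter.2 ⟨hx, hPx⟩))
        · exact Finset.mem_union_right _ (h2 (Finset.mem_filter.2 ⟨hx, hPx⟩))
      · intro hsub
        constructor
        · intro x hx
          obtain ⟨hxs, hPx⟩ := Finset.mem_filter.1 hx
          rcases Finset.mem_union.1 (hsub hxs) with h | h
          · exact h
          · exact absurd hPx (hB sb (fun y hy => hy) x h)
        · intro x hx
          obtain ⟨hxs, hPx⟩ := Finset.mem_filter.1 hx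
          rcases Finset.mem_union.1 (hsub hxs) with h | h
          · exact absurd (hsa x h) hPx
          · exact h
    rw [he]
    exact IsVertexDecomposable.simplex _
  | step Δ w hw hdel hlink hfac ihdel ihlink =>
    intro hB
    have hPw : ¬ P w := hB {w} hw w (Finset.mem_singleton_self w)
    have hsuppdel : ∀ b ∈ faceDeletion Δ w, ∀ x ∈ b, ¬ P x :=
      fun b hb x hx => hB b hb.1 x hx
    have hsupplink : ∀ b ∈ faceLink Δ w, ∀ x ∈ b, ¬ P x :=
      fun b hb x hx => hB _ hb.2 x (Finset.mem_insert_of_mem hx)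
    refine IsVertexDecomposable.step _ w ?_ ?_ ?_ ?_
    · rw [mem_joinOn, Finset.filter_singleton, if_neg hPw, Finset.filter_singleton,
        if_pos hPw]
      exact ⟨Finset.empty_subset _, hw⟩
    · rw [join_del_right hPw]; exact ihdel hsuppdel
    · rw [join_link_right hPw]; exact ihlink hsupplink
    · intro s hs
      rw [join_del_right hPw] at hs
      obtain ⟨fA, fB⟩ := (join_facet_iff hsuppA hsuppdel).1 hs
      exact (join_facet_iff hsuppA hB).2 ⟨fA, hfac _ fB⟩

lemma vd_join :
    ∀ {A : Set (Finset V)}, IsVertexDecomposable A →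
    ∀ {B : Set (Finset V)}, IsVertexDecomposable B →
      (∀ a ∈ A, ∀ x ∈ a, P x) → (∀ b ∈ B, ∀ x ∈ b, ¬ P x) →
      IsVertexDecomposable (joinOn P A B) := by
  intro A hA
  induction hA with
  | simplex sa =>
    intro B hB hsA hsB
    exact vd_join_simplex sa (fun x hx => hsA sa (fun y hy => hy) x hx) hB hsB
  | step Δ v hv hdel hlink hfac ihdel ihlink =>
    intro B hB hsA hsB
    have hPv : P v := hsA {v} hv v (Finset.mem_singleton_self v)
    have hsuppdel : ∀ a ∈ faceDeletion Δ v, ∀ x ∈ a, P x :=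
      fun a ha x hx => hsA a ha.1 x hx
    have hsupplink : ∀ a ∈ faceLink Δ v, ∀ x ∈ a, P x :=
      fun a ha x hx => hsA _ ha.2 x (Finset.mem_insert_of_mem hx)
    refine IsVertexDecomposable.step _ v ?_ ?_ ?_ ?_
    · rw [mem_joinOn, Finset.filter_singleton, if_pos hPv, Finset.filter_singleton,
        if_neg (not_not_intro hPv)]
      exact ⟨hv, vd_empty_mem hB⟩
    · rw [join_del_left hPv]; exact ihdel hB hsuppdel hsB
    · rw [join_link_left hPv]; exact ihlink hB hsupplink hsB
    · intro s hs
      rw [join_del_left hPv] at hs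
      obtain ⟨fA, fB⟩ := (join_facet_iff hsuppdel hsB).1 hs
      exact (join_facet_iff hsA hsB).2 ⟨hfac _ fA, fB⟩

end JoinLemmas

/-! ### Complexes with the augmentation property are vertex decomposable -/

lemma vd_of_exchange [Fintype V] :
    ∀ (n : ℕ) (Δ : Set (Finset V)), ∅ ∈ Δ →
      (∀ s t : Finset V, s ⊆ t → t ∈ Δ → s ∈ Δ) →
      (∀ s t : Finset V, s ∈ Δ → t ∈ Δ → s.card < t.card →
        ∃ x ∈ t, x ∉ s ∧ insert x s ∈ Δ) →
      Set.ncard {x : V | {x} ∈ Δ} ≤ n → IsVertexDecomposable Δ := by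
  intro n
  induction n using Nat.strong_induction_on with
  | _ n ih =>
  intro Δ hemp hdown haug hcard
  obtain ⟨s₀, hs₀, hs₀max⟩ :=
    Set.Finite.exists_maximalFor Finset.card Δ (Set.toFinite Δ) ⟨∅, hemp⟩
  have hmaxcard : ∀ t ∈ Δ, t.card ≤ s₀.card := by
    intro t ht
    by_contra hlt
    push_neg at hlt
    have := hs₀max ht hlt.le
    omega
  by_cases hV : ∀ x : V, {x} ∈ Δ → x ∈ s₀
  · have hΔ : Δ = {t | t ⊆ s₀} := by
      ext t
      constructor
      · intro ht x hx
        exact hV x (hdown {x} t (Finset.singleton_subset_iff.2 hx) ht)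
      · intro ht; exact hdown t s₀ ht hs₀
    rw [hΔ]; exact IsVertexDecomposable.simplex s₀
  · push_neg at hV
    obtain ⟨v, hv, hvs₀⟩ := hV
    have hfinV : ({x : V | {x} ∈ Δ}).Finite := Set.toFinite _
    have hvdel : Set.ncard {x : V | {x} ∈ faceDeletion Δ v} < n := by
      have hsub : {x : V | {x} ∈ faceDeletion Δ v} ⊆ {x : V | {x} ∈ Δ} \ {v} := by
        intro x hx
        refine ⟨hx.1, fun he => ?_⟩
        rw [Set.mem_singleton_iff] at he
        exact hx.2 (by rw [he]; exact Finset.mem_singleton_self v)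
      have h1 := Set.ncard_le_ncard hsub hfinV.diff
      have h2 := Set.ncard_diff_singleton_lt_of_mem (show v ∈ {x : V | {x} ∈ Δ} from hv) hfinV
      omega
    have hvlnk : Set.ncard {x : V | {x} ∈ faceLink Δ v} < n := by
      have hsub : {x : V | {x} ∈ faceLink Δ v} ⊆ {x : V | {x} ∈ Δ} \ {v} := by
        intro x hx
        refine ⟨hdown {x} (insert v {x}) (Finset.subset_insert _ _) hx.2, fun he => ?_⟩
        rw [Set.mem_singleton_iff] at he
        exact hx.1 (by rw [he]; exact Finset.mem_singleton_self v)
      have h1 := Set.ncard_le_ncard hsub hfinV.diff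
      have h2 := Set.ncard_diff_singleton_lt_of_mem (show v ∈ {x : V | {x} ∈ Δ} from hv) hfinV
      omega
    refine IsVertexDecomposable.step Δ v hv ?_ ?_ ?_
    · refine ih _ hvdel _ ⟨hemp, Finset.notMem_empty v⟩ ?_ ?_ le_rfl
      · intro s t hst ht
        exact ⟨hdown s t hst ht.1, fun hc => ht.2 (hst hc)⟩
      · intro s t hs ht hc
        obtain ⟨x, hxt, hxs, hxi⟩ := haug s t hs.1 ht.1 hc
        refine ⟨x, hxt, hxs, hxi, ?_⟩
        rw [Finset.mem_insert]
        rintro (rfl | hvs)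
        · exact ht.2 hxt
        · exact hs.2 hvs
    · refine ih _ hvlnk _ ⟨Finset.notMem_empty v, by simpa using hv⟩ ?_ ?_ le_rfl
      · intro s t hst ht
        exact ⟨fun hc => ht.1 (hst hc),
          hdown _ _ (Finset.insert_subset_insert v hst) ht.2⟩
      · intro s t hs ht hc
        have hc' : (insert v s).card < (insert v t).card := by
          rw [Finset.card_insert_of_notMem hs.1, Finset.card_insert_of_notMem ht.1]
          omega
        obtain ⟨x, hxt, hxs, hxi⟩ := haug _ _ hs.2 ht.2 hc'
        have hxv : x ≠ v := fun he => hxs (he ▸ Finset.mem_insert_self v s)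
        have hxt' : x ∈ t := by
          rcases Finset.mem_insert.1 hxt with h | h
          · exact absurd h hxv
          · exact h
        have hxs' : x ∉ s := fun h => hxs (Finset.mem_insert_of_mem h)
        refine ⟨x, hxt', hxs', ?_, ?_⟩
        · rw [Finset.mem_insert]
          rintro (rfl | hvs)
          · exact hxv rfl
          · exact hs.1 hvs
        · rwa [Finset.insert_comm]
    · intro s hs
      refine ⟨hs.1.1, fun t ht hsub => ?_⟩
      by_cases hvt : v ∈ t
      · exfalso
        have hins : insert v s ∈ Δ :=
          hdown (insert v s) t (Finset.insert_subset hvt hsub) ht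
        by_cases hc : s.card < s₀.card
        · obtain ⟨x, hxt, hxs, hxi⟩ := haug s s₀ hs.1.1 hs₀ hc
          have hmem : insert x s ∈ faceDeletion Δ v := by
            refine ⟨hxi, ?_⟩
            rw [Finset.mem_insert]
            rintro (rfl | hvs)
            · exact hvs₀ hxt
            · exact hs.1.2 hvs
          have heq := hs.2 (insert x s) hmem (Finset.subset_insert x s)
          exact hxs (heq ▸ Finset.mem_insert_self x s)
        · push_neg at hc
          have h1 := hmaxcard _ hins
          rw [Finset.card_insert_of_notMem hs.1.2] at h1
          omega
      · exact hs.2 t ⟨ht, hvt⟩ hsub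

end AuxA

/-! ### Chain complexes of families of flats -/

section ChainCpx

variable {E : Type*} [Fintype E] [DecidableEq E]

/-- chains inside a family `W` of finsets -/
def chainCpx (W : Set (Finset E)) : Set (Finset (Finset E)) :=
  {C | (∀ F ∈ C, F ∈ W) ∧ ∀ F ∈ C, ∀ G ∈ C, F ⊆ G ∨ G ⊆ F}

lemma mem_chainCpx {W : Set (Finset E)} {C : Finset (Finset E)} :
    C ∈ chainCpx W ↔ (∀ F ∈ C, F ∈ W) ∧ ∀ F ∈ C, ∀ G ∈ C, F ⊆ G ∨ G ⊆ F := Iff.rfl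

lemma chainCpx_down {W : Set (Finset E)} {C D : Finset (Finset E)}
    (h : C ⊆ D) (hD : D ∈ chainCpx W) : C ∈ chainCpx W :=
  ⟨fun F hF => hD.1 F (h hF), fun F hF G hG => hD.2 F (h hF) G (h hG)⟩

lemma chainCpx_mono {W W' : Set (Finset E)} (h : W ⊆ W') :
    chainCpx W ⊆ chainCpx W' :=
  fun _C hC => ⟨fun F hF => h (hC.1 F hF), hC.2⟩

lemma chainCpx_empty : chainCpx (∅ : Set (Finset E)) = {∅} := by
  ext C
  simp only [mem_chainCpx, Set.mem_empty_iff_false, Set.mem_singleton_iff]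
  constructor
  · rintro ⟨h1, -⟩
    by_contra hne
    obtain ⟨F, hF⟩ := Finset.nonempty_iff_ne_empty.2 hne
    exact h1 F hF
  · rintro rfl
    exact ⟨fun F hF => absurd hF (Finset.notMem_empty F), fun F hF => absurd hF (Finset.notMem_empty F)⟩

variable (f : ClosureOp E)

/-- open interval of proper flats -/
def openInt (B T : Finset E) : Set (Finset E) :=
  {G | f.cl G = G ∧ B ⊂ G ∧ G ⊂ T}

/-- half-open interval of flats -/
def upInt (A T : Finset E) : Set (Finset E) :=
  {G | f.cl G = G ∧ A ⊆ G ∧ G ⊂ T}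

lemma flat_cl_subset {F X : Finset E} (hF : f.cl F = F) (h : X ⊆ F) : f.cl X ⊆ F := by
  have := f.cl_mono h
  rwa [hF] at this

lemma sdiff_card_lt_of_between {B H T : Finset E} (hBH : B ⊆ H) (hHT : H ⊂ T) :
    (H \ B).card < (T \ B).card := by
  apply Finset.card_lt_card
  constructor
  · exact Finset.sdiff_subset_sdiff hHT.subset (Finset.Subset.refl _)
  · intro hsub
    obtain ⟨y, hyT, hyH⟩ := Finset.exists_of_ssubset hHT
    have : y ∈ H \ B := hsub (Finset.mem_sdiff.2 ⟨hyT, fun hyB => hyH (hBH hyB)⟩)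
    exact hyH (Finset.mem_sdiff.1 this).1

lemma sdiff_card_lt_of_grow {B B' T : Finset E} (hBB' : B ⊆ B') {p : E}
    (hp : p ∈ B') (hpT : p ∈ T) (hpB : p ∉ B) :
    (T \ B').card < (T \ B).card := by
  apply Finset.card_lt_card
  constructor
  · exact Finset.sdiff_subset_sdiff (Finset.Subset.refl _) hBB'
  · intro hsub
    have : p ∈ T \ B' := hsub (Finset.mem_sdiff.2 ⟨hpT, hpB⟩)
    exact (Finset.mem_sdiff.1 this).2 hp

/-- the key exchange consequence -/
lemma not_subset_cl_insert
    (hexch : ∀ (X : Finset E) (x y : E), y ∈ f.cl (insert x X) → y ∉ f.cl X →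
      x ∈ f.cl (insert y X))
    {G H : Finset E} (hG : f.cl G = G) (hH : f.cl H = H) {p : E}
    (hpH : p ∉ H) (hGH : G ⊂ H) : ¬ H ⊆ f.cl (insert p G) := by
  intro hsub
  obtain ⟨y, hyH, hyG⟩ := Finset.exists_of_ssubset hGH
  have h1 : y ∈ f.cl (insert p G) := hsub hyH
  have h2 : y ∉ f.cl G := by rw [hG]; exact hyG
  have h3 : p ∈ f.cl (insert y G) := hexch G p y h1 h2
  have h4 : f.cl (insert y G) ⊆ H :=
    flat_cl_subset f hH (Finset.insert_subset hyH hGH.subset)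
  exact hpH (h4 h3)

/-- VD for the chain complex of a half-open interval `[A, T)`, assuming it for
the open interval. -/
lemma upInt_vd {A T : Finset E} (hA : f.cl A = A) (hAT : A ⊆ T)
    (hbase : A ⊂ T → IsVertexDecomposable (chainCpx (openInt f A T))) :
    IsVertexDecomposable (chainCpx (upInt f A T)) := by
  by_cases hcase : A ⊂ T
  · have hEq : chainCpx (upInt f A T) =
        joinOn (· = A) {t | t ⊆ ({A} : Finset (Finset E))}
          (chainCpx (openInt f A T)) := by
      ext s
      rw [mem_joinOn]
      constructor
      · intro hsC
        refine ⟨?_, ?_, ?_⟩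
        · intro x hx
          rw [Finset.mem_filter] at hx
          exact Finset.mem_singleton.2 hx.2
        · intro G hG
          rw [Finset.mem_filter] at hG
          obtain ⟨hGs, hGA⟩ := hG
          obtain ⟨hGf, hGA', hGT⟩ := hsC.1 G hGs
          exact ⟨hGf, lt_of_le_of_ne hGA' (Ne.symm hGA), hGT⟩
        · intro G hG G' hG'
          rw [Finset.mem_filter] at hG hG'
          exact hsC.2 G hG.1 G' hG'.1
      · rintro ⟨h1, h2⟩
        have hmem : ∀ G ∈ s, G ∈ upInt f A T := by
          intro G hG
          by_cases hGA : G = A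
          · rw [hGA]
            exact ⟨hA, Finset.Subset.refl A, hcase⟩
          · have : G ∈ openInt f A T := h2.1 G (Finset.mem_filter.2 ⟨hG, hGA⟩)
            exact ⟨this.1, this.2.1.subset, this.2.2⟩
        refine ⟨hmem, ?_⟩
        intro G hG G' hG'
        by_cases hGA : G = A
        · rw [hGA]
          exact Or.inl (hmem G' hG').2.1
        · by_cases hG'A : G' = A
          · rw [hG'A]
            exact Or.inr (hmem G hG).2.1
          · exact h2.2 G (Finset.mem_filter.2 ⟨hG, hGA⟩) G' (Finset.mem_filter.2 ⟨hG', hG'A⟩)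
    rw [hEq]
    refine vd_join (IsVertexDecomposable.simplex _) (hbase hcase) ?_ ?_
    · intro a ha x hx
      exact Finset.mem_singleton.1 (ha hx)
    · intro b hb x hx hxA
      subst hxA
      exact (hb.1 x hx).2.1.ne rfl
  · have hAT' : A = T := hAT.antisymm (by
      by_contra hTA
      exact hcase (lt_of_le_of_ne hAT (fun h => hTA (h ▸ Finset.Subset.refl _))))
    have : upInt f A T = ∅ := by
      ext G
      simp only [upInt, Set.mem_setOf_eq, Set.mem_empty_iff_false, iff_false]
      rintro ⟨-, hAG, hGT⟩
      subst hAT'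
      exact (not_lt_of_ge hAG) hGT
    rw [this, chainCpx_empty]
    exact vd_singleton_empty


theorem chain_vd
    (hexch : ∀ (X : Finset E) (x y : E), y ∈ f.cl (insert x X) → y ∉ f.cl X →
      x ∈ f.cl (insert y X)) :
    ∀ (n : ℕ) (B T : Finset E), f.cl B = B → f.cl T = T → B ⊂ T →
      (T \ B).card ≤ n → IsVertexDecomposable (chainCpx (openInt f B T)) := by
  intro n
  induction n using Nat.strong_induction_on with
  | _ n ih =>
  intro B T hB hT hBT hcard
  by_cases hne : (openInt f B T).Nonempty
  swap
  · rw [Set.not_nonempty_iff_eq_empty] at hne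
    rw [hne, chainCpx_empty]
    exact vd_singleton_empty
  obtain ⟨G₀, hG₀f, hG₀B, hG₀T⟩ := hne
  obtain ⟨p, hpG₀, hpB⟩ := Finset.exists_of_ssubset hG₀B
  have hpT : p ∈ T := hG₀T.subset hpG₀
  set X₀ := f.cl (insert p B) with hX₀def
  have hX₀flat : f.cl X₀ = X₀ := f.cl_idem _
  have hpX₀ : p ∈ X₀ := f.subset_cl _ (Finset.mem_insert_self p B)
  have hBX₀ : B ⊆ X₀ := (Finset.subset_insert p B).trans (f.subset_cl _)
  have hX₀G₀ : X₀ ⊆ G₀ := flat_cl_subset f hG₀f (Finset.insert_subset hpG₀ hG₀B.subset)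
  have hX₀T : X₀ ⊂ T := lt_of_le_of_lt hX₀G₀ hG₀T
  have hbase0 : IsVertexDecomposable
      (chainCpx {G | f.cl G = G ∧ B ⊂ G ∧ G ⊂ T ∧ p ∈ G}) := by
    have hEq : {G | f.cl G = G ∧ B ⊂ G ∧ G ⊂ T ∧ p ∈ G} = upInt f X₀ T := by
      ext G
      constructor
      · rintro ⟨h1, h2, h3, h4⟩
        exact ⟨h1, flat_cl_subset f h1 (Finset.insert_subset h4 h2.subset), h3⟩
      · rintro ⟨h1, h2, h3⟩
        refine ⟨h1, ?_, h3, h2 hpX₀⟩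
        refine lt_of_le_of_ne (hBX₀.trans h2) ?_
        intro he
        exact hpB (he ▸ h2 hpX₀)
    rw [hEq]
    refine upInt_vd f hX₀flat hX₀T.subset (fun hss => ?_)
    exact ih ((T \ X₀).card)
      (lt_of_lt_of_le (sdiff_card_lt_of_grow hBX₀ hpX₀ hpT hpB) hcard)
      X₀ T hX₀flat hT hss le_rfl
  have claim : ∀ (m : ℕ) (R : Finset (Finset E)),
      (∀ G ∈ R, f.cl G = G ∧ B ⊂ G ∧ G ⊂ T ∧ p ∉ G) →
      (∀ G₁ ∈ R, ∀ G₂ : Finset E, f.cl G₂ = G₂ → B ⊂ G₂ → G₂ ⊂ T → p ∉ G₂ →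
        G₂.card < G₁.card → G₂ ∈ R) →
      R.card ≤ m →
      IsVertexDecomposable
        (chainCpx ({G | f.cl G = G ∧ B ⊂ G ∧ G ⊂ T ∧ p ∈ G} ∪ ↑R)) := by
    intro m
    induction m with
    | zero =>
      intro R hR hINV hc
      have hRe : R = ∅ := Finset.card_eq_zero.1 (Nat.le_zero.1 hc)
      rw [hRe, Finset.coe_empty, Set.union_empty]
      exact hbase0
    | succ m ihm =>
      intro R hR hINV hc
      by_cases hRe : R = ∅
      · rw [hRe, Finset.coe_empty, Set.union_empty]
        exact hbase0
      obtain ⟨H, hHR, hHmax⟩ :=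
        Finset.exists_max_image R Finset.card (Finset.nonempty_iff_ne_empty.2 hRe)
      obtain ⟨hHf, hBH, hHT, hpH⟩ := hR H hHR
      set Pp := {G | f.cl G = G ∧ B ⊂ G ∧ G ⊂ T ∧ p ∈ G} with hPpdef
      set Hp := f.cl (insert p H) with hHpdef
      have hHpflat : f.cl Hp = Hp := f.cl_idem _
      have hpHp : p ∈ Hp := f.subset_cl _ (Finset.mem_insert_self p H)
      have hHHp : H ⊆ Hp := (Finset.subset_insert p H).trans (f.subset_cl _)
      have hHpT : Hp ⊆ T :=
        flat_cl_subset f hT (Finset.insert_subset hpT hHT.subset)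
      have hHW : H ∈ Pp ∪ ↑R := Or.inr (by exact_mod_cast hHR)
      have habove : ∀ G, G ∈ Pp ∪ ↑R → H ⊂ G →
          f.cl G = G ∧ p ∈ G ∧ Hp ⊆ G ∧ G ⊂ T := by
        intro G hGW hHG
        rcases hGW with hGP | hGR
        · obtain ⟨h1, h2, h3, h4⟩ := hGP
          exact ⟨h1, h4, flat_cl_subset f h1 (Finset.insert_subset h4 hHG.subset), h3⟩
        · exfalso
          have h1 := hHmax G (by exact_mod_cast hGR)
          have h2 := Finset.card_lt_card hHG
          omega
      have hbelow : ∀ G, G ∈ Pp ∪ ↑R → G ⊂ H → G ∈ R := by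
        intro G hGW hGH
        rcases hGW with hGP | hGR
        · exact absurd (hGH.subset hGP.2.2.2) hpH
        · exact_mod_cast hGR
      have hdelEq : faceDeletion (chainCpx (Pp ∪ ↑R)) H =
          chainCpx (Pp ∪ ↑(R.erase H)) := by
        ext s
        constructor
        · rintro ⟨⟨h1, h2⟩, hHs⟩
          refine ⟨?_, h2⟩
          intro F hF
          rcases h1 F hF with hFP | hFR
          · exact Or.inl hFP
          · refine Or.inr ?_
            rw [Finset.coe_erase]
            exact ⟨hFR, fun he => hHs ((Set.mem_singleton_iff.1 he) ▸ hF)⟩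
        · rintro ⟨h1, h2⟩
          refine ⟨⟨?_, h2⟩, ?_⟩
          · intro F hF
            rcases h1 F hF with hFP | hFR
            · exact Or.inl hFP
            · rw [Finset.coe_erase] at hFR
              exact Or.inr hFR.1
          · intro hHs
            rcases h1 H hHs with hHP | hHR'
            · exact hpH hHP.2.2.2
            · rw [Finset.coe_erase] at hHR'
              exact hHR'.2 rfl
      have hlinkEq : faceLink (chainCpx (Pp ∪ ↑R)) H =
          joinOn (· ⊂ H) (chainCpx (openInt f B H)) (chainCpx (upInt f Hp T)) := by
        ext s
        rw [mem_joinOn]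
        constructor
        · rintro ⟨hHs, hins⟩
          have hcmp : ∀ G ∈ s, G ⊂ H ∨ H ⊂ G := by
            intro G hG
            have hne : G ≠ H := fun he => hHs (he ▸ hG)
            rcases hins.2 G (Finset.mem_insert_of_mem hG) H (Finset.mem_insert_self _ _)
              with h | h
            · exact Or.inl (lt_of_le_of_ne h hne)
            · exact Or.inr (lt_of_le_of_ne h hne.symm)
          have hsW : ∀ G ∈ s, G ∈ Pp ∪ ↑R :=
            fun G hG => hins.1 G (Finset.mem_insert_of_mem hG)
          refine ⟨⟨?_, ?_⟩, ⟨?_, ?_⟩⟩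
          · intro G hG
            rw [Finset.mem_filter] at hG
            obtain ⟨hGs, hGH⟩ := hG
            have hGR := hbelow G (hsW G hGs) hGH
            obtain ⟨h1, h2, h3, h4⟩ := hR G hGR
            exact ⟨h1, h2, hGH⟩
          · intro G hG G' hG'
            rw [Finset.mem_filter] at hG hG'
            exact hins.2 G (Finset.mem_insert_of_mem hG.1) G'
              (Finset.mem_insert_of_mem hG'.1)
          · intro G hG
            rw [Finset.mem_filter] at hG
            obtain ⟨hGs, hGH⟩ := hG
            rcases hcmp G hGs with h | h
            · exact absurd h hGH
            · obtain ⟨h1, h2, h3, h4⟩ := habove G (hsW G hGs) h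
              exact ⟨h1, h3, h4⟩
          · intro G hG G' hG'
            rw [Finset.mem_filter] at hG hG'
            exact hins.2 G (Finset.mem_insert_of_mem hG.1) G'
              (Finset.mem_insert_of_mem hG'.1)
        · rintro ⟨h1, h2⟩
          have hmem : ∀ G ∈ s, G ∈ Pp ∪ ↑R ∧ (G ⊂ H ∨ (H ⊆ G ∧ Hp ⊆ G)) := by
            intro G hG
            by_cases hGH : G ⊂ H
            · have hmem' := h1.1 G (Finset.mem_filter.2 ⟨hG, hGH⟩)
              obtain ⟨hf, hBG, hGH'⟩ := hmem'
              have hGR : G ∈ R := by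
                refine hINV H hHR G hf hBG (lt_trans hGH' hHT) ?_
                  (Finset.card_lt_card hGH')
                intro hpG
                exact hpH (hGH'.subset hpG)
              exact ⟨Or.inr (by exact_mod_cast hGR), Or.inl hGH⟩
            · have hmem' := h2.1 G (Finset.mem_filter.2 ⟨hG, hGH⟩)
              obtain ⟨hf, hHpG, hGT⟩ := hmem'
              refine ⟨Or.inl ⟨hf, ?_, hGT, hHpG hpHp⟩, Or.inr ⟨hHHp.trans hHpG, hHpG⟩⟩
              exact lt_of_lt_of_le hBH (hHHp.trans hHpG)
          constructor
          · intro hHs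
            rcases (hmem H hHs).2 with h | h
            · exact (lt_irrefl H) h
            · exact hpH (h.2 hpHp)
          · constructor
            · intro F hF
              rcases Finset.mem_insert.1 hF with rfl | hFs
              · exact hHW
              · exact (hmem F hFs).1
            · intro F hF G hG
              rcases Finset.mem_insert.1 hF with rfl | hFs <;>
                rcases Finset.mem_insert.1 hG with rfl | hGs
              · exact Or.inl (Finset.Subset.refl _)
              · rcases (hmem G hGs).2 with h | h
                · exact Or.inr h.subset
                · exact Or.inl h.1
              · rcases (hmem F hFs).2 with h | h
                · exact Or.inl h.subset
                · exact Or.inr h.1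
              · rcases (hmem F hFs).2 with hf | hf <;> rcases (hmem G hGs).2 with hg | hg
                · exact h1.2 F (Finset.mem_filter.2 ⟨hFs, hf⟩) G
                    (Finset.mem_filter.2 ⟨hGs, hg⟩)
                · exact Or.inl (hf.subset.trans hg.1)
                · exact Or.inr (hg.subset.trans hf.1)
                · refine h2.2 F (Finset.mem_filter.2 ⟨hFs, ?_⟩) G
                    (Finset.mem_filter.2 ⟨hGs, ?_⟩)
                  · exact fun hc => (lt_irrefl H) (lt_of_le_of_lt hf.1 hc)
                  · exact fun hc => (lt_irrefl H) (lt_of_le_of_lt hg.1 hc)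
      refine IsVertexDecomposable.step _ H ?_ ?_ ?_ ?_
      · exact ⟨fun F hF => (Finset.mem_singleton.1 hF) ▸ hHW,
          fun F hF G hG => by
            rw [Finset.mem_singleton.1 hF, Finset.mem_singleton.1 hG]
            exact Or.inl (Finset.Subset.refl _)⟩
      · rw [hdelEq]
        refine ihm (R.erase H) (fun G hG => hR G (Finset.mem_of_mem_erase hG)) ?_ ?_
        · intro G₁ hG₁ G₂ hf hBG hGT hpG hcard2
          have hG₁R := Finset.mem_of_mem_erase hG₁
          have hG₂R := hINV G₁ hG₁R G₂ hf hBG hGT hpG hcard2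
          refine Finset.mem_erase.2 ⟨?_, hG₂R⟩
          intro he
          rw [he] at hcard2
          have := hHmax G₁ hG₁R
          omega
        · have := Finset.card_erase_of_mem hHR
          omega
      · rw [hlinkEq]
        refine vd_join ?_ ?_ ?_ ?_
        · exact ih ((H \ B).card)
            (lt_of_lt_of_le (sdiff_card_lt_of_between hBH.subset hHT) hcard)
            B H hB hHf hBH le_rfl
        · refine upInt_vd f hHpflat hHpT (fun hss => ?_)
          refine ih ((T \ Hp).card) ?_ Hp T hHpflat hT hss le_rfl
          exact lt_of_lt_of_le
            (sdiff_card_lt_of_grow (hBH.subset.trans hHHp) hpHp hpT hpB) hcard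
        · intro a ha x hx
          exact (ha.1 x hx).2.2
        · intro b hb x hx hc
          have h := (hb.1 x hx).2.1
          exact (lt_irrefl H) (lt_of_le_of_lt (hHHp.trans h) hc)
      · intro s hs
        refine ⟨hs.1.1, fun t ht hsub => ?_⟩
        have hts : t ⊆ insert H s := by
          intro x hxt
          by_contra hxs
          rw [Finset.mem_insert] at hxs
          push_neg at hxs
          obtain ⟨hxH, hxs⟩ := hxs
          have hmem : insert x s ∈ faceDeletion (chainCpx (Pp ∪ ↑R)) H := by
            refine ⟨chainCpx_down (Finset.insert_subset hxt hsub) ht, ?_⟩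
            rw [Finset.mem_insert]
            rintro (rfl | hHs2)
            · exact hxH rfl
            · exact hs.1.2 hHs2
          have heq := hs.2 _ hmem (Finset.subset_insert x s)
          exact hxs (heq ▸ Finset.mem_insert_self x s)
        by_cases hHt : H ∈ t
        swap
        · refine Finset.Subset.antisymm hsub (fun x hxt => ?_)
          rcases Finset.mem_insert.1 (hts hxt) with rfl | h
          · exact absurd hxt hHt
          · exact h
        · exfalso
          have hHs : H ∉ s := hs.1.2
          have hins : insert H s ∈ chainCpx (Pp ∪ ↑R) :=
            chainCpx_down (Finset.insert_subset hHt hsub) ht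
          have hsC : s ∈ chainCpx (Pp ∪ ↑R) := hs.1.1
          have hcmp : ∀ G ∈ s, G ⊂ H ∨ H ⊂ G := by
            intro G hG
            have hne : G ≠ H := fun he => hHs (he ▸ hG)
            rcases hins.2 G (Finset.mem_insert_of_mem hG) H (Finset.mem_insert_self _ _)
              with h | h
            · exact Or.inl (lt_of_le_of_ne h hne)
            · exact Or.inr (lt_of_le_of_ne h hne.symm)
          by_cases hsbne : (s.filter (· ⊂ H)).Nonempty
          · obtain ⟨Gm, hGmf, hGmmax⟩ := Finset.exists_max_image _ Finset.card hsbne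
            rw [Finset.mem_filter] at hGmf
            obtain ⟨hGms, hGmH⟩ := hGmf
            have hGmtop : ∀ G ∈ s, G ⊂ H → G ⊆ Gm := by
              intro G hG hGH
              rcases hsC.2 G hG Gm hGms with h | h
              · exact h
              · have h1 := hGmmax G (Finset.mem_filter.2 ⟨hG, hGH⟩)
                rw [Finset.eq_of_subset_of_card_le h h1]
            have hGmR : Gm ∈ R := hbelow Gm (hsC.1 Gm hGms) hGmH
            obtain ⟨hGmflat, hBGm, hGmT, hpGm⟩ := hR Gm hGmR
            set X := f.cl (insert p Gm) with hXdef
            have hXflat : f.cl X = X := f.cl_idem _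
            have hpX : p ∈ X := f.subset_cl _ (Finset.mem_insert_self _ _)
            have hGmX : Gm ⊆ X := (Finset.subset_insert p Gm).trans (f.subset_cl _)
            have hnotHX : ¬ H ⊆ X := not_subset_cl_insert f hexch hGmflat hHf hpH hGmH
            have hXT : X ⊂ T := by
              refine lt_of_le_of_ne
                (flat_cl_subset f hT (Finset.insert_subset hpT hGmT.subset)) ?_
              intro he
              exact hnotHX (by rw [he]; exact hHT.subset)
            have hXW : X ∈ Pp ∪ ↑R :=
              Or.inl ⟨hXflat, lt_of_lt_of_le hBGm hGmX, hXT, hpX⟩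
            have hXs : X ∉ s := by
              intro hXs
              rcases hcmp X hXs with h | h
              · exact hpH (h.subset hpX)
              · exact hnotHX h.subset
            have hmem : insert X s ∈ faceDeletion (chainCpx (Pp ∪ ↑R)) H := by
              refine ⟨⟨?_, ?_⟩, ?_⟩
              · intro F hF
                rcases Finset.mem_insert.1 hF with rfl | h
                · exact hXW
                · exact hsC.1 F h
              · intro F hF G hG
                rcases Finset.mem_insert.1 hF with rfl | hFs <;>
                  rcases Finset.mem_insert.1 hG with rfl | hGs
                · exact Or.inl (Finset.Subset.refl _)
                · rcases hcmp G hGs with h | h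
                  · exact Or.inr ((hGmtop G hGs h).trans hGmX)
                  · refine Or.inl ?_
                    obtain ⟨h1, h2, h3, h4⟩ := habove G (hsC.1 G hGs) h
                    exact flat_cl_subset f h1
                      (Finset.insert_subset h2 (hGmH.subset.trans h.subset))
                · rcases hcmp F hFs with h | h
                  · exact Or.inl ((hGmtop F hFs h).trans hGmX)
                  · refine Or.inr ?_
                    obtain ⟨h1, h2, h3, h4⟩ := habove F (hsC.1 F hFs) h
                    exact flat_cl_subset f h1
                      (Finset.insert_subset h2 (hGmH.subset.trans h.subset))
                · exact hsC.2 F hFs G hGs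
              · rw [Finset.mem_insert]
                rintro (he | h)
                · exact hpH (he ▸ hpX)
                · exact hHs h
            have heq := hs.2 _ hmem (Finset.subset_insert X s)
            exact hXs (heq ▸ Finset.mem_insert_self X s)
          · have hallup : ∀ G ∈ s, H ⊂ G := by
              intro G hG
              rcases hcmp G hG with h | h
              · exact absurd ⟨G, Finset.mem_filter.2 ⟨hG, h⟩⟩ hsbne
              · exact h
            have hnotHX : ¬ H ⊆ X₀ := not_subset_cl_insert f hexch hB hHf hpH hBH
            have hX₀W : X₀ ∈ Pp ∪ ↑R :=
              Or.inl ⟨hX₀flat, lt_of_le_of_ne hBX₀ (fun he => hpB (he ▸ hpX₀)),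
                hX₀T, hpX₀⟩
            have hX₀s : X₀ ∉ s := by
              intro hXs
              exact hnotHX (hallup X₀ hXs).subset
            have hmem : insert X₀ s ∈ faceDeletion (chainCpx (Pp ∪ ↑R)) H := by
              refine ⟨⟨?_, ?_⟩, ?_⟩
              · intro F hF
                rcases Finset.mem_insert.1 hF with rfl | h
                · exact hX₀W
                · exact hsC.1 F h
              · intro F hF G hG
                rcases Finset.mem_insert.1 hF with rfl | hFs <;>
                  rcases Finset.mem_insert.1 hG with rfl | hGs
                · exact Or.inl (Finset.Subset.refl _)
                · refine Or.inl ?_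
                  obtain ⟨h1, h2, h3, h4⟩ := habove G (hsC.1 G hGs) (hallup G hGs)
                  exact flat_cl_subset f h1
                    (Finset.insert_subset h2 (hBH.subset.trans (hallup G hGs).subset))
                · refine Or.inr ?_
                  obtain ⟨h1, h2, h3, h4⟩ := habove F (hsC.1 F hFs) (hallup F hFs)
                  exact flat_cl_subset f h1
                    (Finset.insert_subset h2 (hBH.subset.trans (hallup F hFs).subset))
                · exact hsC.2 F hFs G hGs
              · rw [Finset.mem_insert]
                rintro (he | h)
                · exact hpH (he ▸ hpX₀)
                · exact hHs h
            have heq := hs.2 _ hmem (Finset.subset_insert X₀ s)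
            exact hX₀s (heq ▸ Finset.mem_insert_self X₀ s)
  classical
  set Rall := Finset.univ.filter
    (fun G : Finset E => f.cl G = G ∧ B ⊂ G ∧ G ⊂ T ∧ p ∉ G) with hRdef
  have hWeq : {G | f.cl G = G ∧ B ⊂ G ∧ G ⊂ T ∧ p ∈ G} ∪ ↑Rall = openInt f B T := by
    ext G
    simp only [Set.mem_union, Set.mem_setOf_eq, hRdef, Finset.coe_filter,
      Finset.mem_univ, true_and, openInt]
    constructor
    · rintro (⟨h1, h2, h3, h4⟩ | ⟨h1, h2, h3, h4⟩) <;> exact ⟨h1, h2, h3⟩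
    · rintro ⟨h1, h2, h3⟩
      by_cases hp : p ∈ G
      · exact Or.inl ⟨h1, h2, h3, hp⟩
      · exact Or.inr ⟨h1, h2, h3, hp⟩
  rw [← hWeq]
  refine claim Rall.card Rall ?_ ?_ le_rfl
  · intro G hG
    exact (Finset.mem_filter.1 hG).2
  · intro G₁ hG₁ G₂ h1 h2 h3 h4 h5
    exact Finset.mem_filter.2 ⟨Finset.mem_univ _, h1, h2, h3, h4⟩

end ChainCpx


/-! ## Matroid bridge -/

section Bridge

variable {E : Type*} [Fintype E] [DecidableEq E] (M : Matroid E) (hE : M.E = Set.univ)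

lemma clOp_mem {A : Finset E} {x : E} :
    x ∈ (M.closureOp hE).cl A ↔ x ∈ M.closure ↑A := by
  simp [Matroid.closureOp, Set.Finite.mem_toFinset]

lemma clOp_subset_iff {A : Finset E} {F : Finset E} :
    (M.closureOp hE).cl A ⊆ F ↔ M.closure ↑A ⊆ ↑F := by
  constructor
  · intro h x hx
    exact h ((clOp_mem M hE).2 hx)
  · intro h x hx
    exact h ((clOp_mem M hE).1 hx)

lemma clOp_indep_iff {I : Finset E} :
    (M.closureOp hE).Indep I ↔ M.Indep ↑I := by
  have hIE : (↑I : Set E) ⊆ M.E := by rw [hE]; exact Set.subset_univ _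
  constructor
  · intro h
    rw [Matroid.indep_iff_forall_notMem_closure_diff hIE]
    intro e he hecl
    have h2 := h e he
    have hsub : (M.closureOp hE).cl I ⊆ (M.closureOp hE).cl (I.erase e) := by
      intro x hx
      rw [clOp_mem] at hx ⊢
      have hIcl : (↑I : Set E) ⊆ M.closure ↑(I.erase e) := by
        intro y hy
        by_cases hye : y = e
        · subst hye
          rw [Finset.coe_erase]
          exact hecl
        · refine M.subset_closure _ (by rw [hE]; exact Set.subset_univ _) ?_
          rw [Finset.coe_erase]
          exact ⟨hy, hye⟩
      have := M.closure_subset_closure_of_subset_closure hIcl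
      exact this hx
    exact (lt_irrefl _) (lt_of_lt_of_le h2 hsub)
  · intro h i hi
    rw [Finset.ssubset_def]
    constructor
    · exact (M.closureOp hE).cl_mono (Finset.erase_subset i I)
    · intro hsub
      have h1 : i ∈ (M.closureOp hE).cl I := (M.closureOp hE).subset_cl I hi
      have h2 := hsub h1
      rw [clOp_mem] at h2
      have h3 := Matroid.Indep.notMem_closure_diff_of_mem h (by exact_mod_cast hi)
      rw [Finset.coe_erase] at h2
      exact h3 h2

lemma clOp_indep_subset {s t : Finset E} (h : (M.closureOp hE).Indep t)
    (hst : s ⊆ t) : (M.closureOp hE).Indep s := by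
  rw [clOp_indep_iff] at h ⊢
  exact h.subset (by exact_mod_cast hst)

lemma clOp_indep_empty : (M.closureOp hE).Indep ∅ :=
  fun i hi => absurd hi (Finset.notMem_empty i)

lemma clOp_insert_indep {I : Finset E} {i : E} (h : (M.closureOp hE).Indep I)
    (hi : i ∉ (M.closureOp hE).cl I) : (M.closureOp hE).Indep (insert i I) := by
  rw [clOp_indep_iff] at h ⊢
  rw [clOp_mem] at hi
  have := (h.insert_indep_iff (e := i)).2
    (Or.inl ⟨by rw [hE]; trivial, hi⟩)
  rwa [Finset.coe_insert]

lemma clOp_augment {s t : Finset E} (hs : (M.closureOp hE).Indep s)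
    (ht : (M.closureOp hE).Indep t) (hc : s.card < t.card) :
    ∃ x ∈ t, x ∉ s ∧ (M.closureOp hE).Indep (insert x s) := by
  rw [clOp_indep_iff] at hs ht
  obtain ⟨e, he, hind⟩ := hs.augment ht (by
    rw [Set.encard_coe_eq_coe_finsetCard, Set.encard_coe_eq_coe_finsetCard]
    exact_mod_cast hc)
  obtain ⟨het, hes⟩ := he
  refine ⟨e, by exact_mod_cast het, by exact_mod_cast hes, ?_⟩
  rw [clOp_indep_iff, Finset.coe_insert]
  exact hind

lemma clOp_exch : ∀ (X : Finset E) (x y : E),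
    y ∈ (M.closureOp hE).cl (insert x X) → y ∉ (M.closureOp hE).cl X →
    x ∈ (M.closureOp hE).cl (insert y X) := by
  intro X x y h1 h2
  rw [clOp_mem] at h1 h2 ⊢
  rw [Finset.coe_insert] at h1 ⊢
  exact (Matroid.closure_exchange ⟨h1, h2⟩).1

lemma clOp_univ_flat : (M.closureOp hE).cl Finset.univ = Finset.univ :=
  Finset.Subset.antisymm (Finset.subset_univ _) ((M.closureOp hE).subset_cl _)

end Bridge

/-! ## Structure of augmented Bergman faces -/

section AugStruct

variable {E : Type*} [Fintype E] [DecidableEq E]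

open ClosureOp

lemma mem_faceIndep {s : Finset (E ⊕ Finset E)} {x : E} :
    x ∈ faceIndep s ↔ Sum.inl x ∈ s := Finset.mem_preimage

lemma mem_faceFlag {s : Finset (E ⊕ Finset E)} {F : Finset E} :
    F ∈ faceFlag s ↔ Sum.inr F ∈ s := Finset.mem_preimage

lemma faceIndep_union_image {I : Finset E} {C : Finset (Finset E)} :
    faceIndep (I.image Sum.inl ∪ C.image Sum.inr) = I := by
  ext x
  simp [mem_faceIndep]

lemma faceFlag_union_image {I : Finset E} {C : Finset (Finset E)} :
    faceFlag (I.image Sum.inl ∪ C.image Sum.inr) = C := by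
  ext F
  simp [mem_faceFlag]

lemma face_decomp (s : Finset (E ⊕ Finset E)) :
    (faceIndep s).image Sum.inl ∪ (faceFlag s).image Sum.inr = s := by
  ext x
  cases x with
  | inl a => simp [mem_faceIndep, mem_faceFlag]
  | inr F => simp [mem_faceIndep, mem_faceFlag]

lemma faceIndep_insert_inr {s : Finset (E ⊕ Finset E)} {F : Finset E} :
    faceIndep (insert (Sum.inr F) s) = faceIndep s := by
  ext x; simp [mem_faceIndep]

lemma faceFlag_insert_inr {s : Finset (E ⊕ Finset E)} {F : Finset E} :
    faceFlag (insert (Sum.inr F) s) = insert F (faceFlag s) := by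
  ext G; simp [mem_faceFlag]

lemma faceIndep_insert_inl {s : Finset (E ⊕ Finset E)} {i : E} :
    faceIndep (insert (Sum.inl i) s) = insert i (faceIndep s) := by
  ext x; simp [mem_faceIndep]

lemma faceFlag_insert_inl {s : Finset (E ⊕ Finset E)} {i : E} :
    faceFlag (insert (Sum.inl i) s) = faceFlag s := by
  ext G; simp [mem_faceFlag]

lemma faceIndep_mono {s t : Finset (E ⊕ Finset E)} (h : s ⊆ t) :
    faceIndep s ⊆ faceIndep t :=
  fun x hx => mem_faceIndep.2 (h (mem_faceIndep.1 hx))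

lemma faceFlag_mono {s t : Finset (E ⊕ Finset E)} (h : s ⊆ t) :
    faceFlag s ⊆ faceFlag t :=
  fun F hF => mem_faceFlag.2 (h (mem_faceFlag.1 hF))

lemma filter_isLeft (s : Finset (E ⊕ Finset E)) :
    s.filter (fun x => x.isLeft = true) = (faceIndep s).image Sum.inl := by
  ext x
  cases x with
  | inl a => simp [mem_faceIndep]
  | inr F => simp

lemma filter_isRight (s : Finset (E ⊕ Finset E)) :
    s.filter (fun x => ¬ (x.isLeft = true)) = (faceFlag s).image Sum.inr := by
  ext x
  cases x with
  | inl a => simp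
  | inr F => simp [mem_faceFlag]

lemma mem_augBergman_iff {f : ClosureOp E} {s : Finset (E ⊕ Finset E)} :
    s ∈ f.augBergman ↔
      f.Indep (faceIndep s) ∧ (∀ F ∈ faceFlag s, f.IsProperFlat F) ∧
      (∀ F ∈ faceFlag s, ∀ G ∈ faceFlag s, F ⊆ G ∨ G ⊆ F) ∧
      (∀ F ∈ faceFlag s, f.cl (faceIndep s) ⊆ F) := by
  constructor
  · rintro ⟨I, C, heq, h1, h2, h3, h4⟩
    subst heq
    rw [faceIndep_union_image, faceFlag_union_image]
    exact ⟨h1, h2, h3, h4⟩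
  · rintro ⟨h1, h2, h3, h4⟩
    exact ⟨faceIndep s, faceFlag s, (face_decomp s).symm, h1, h2, h3, h4⟩

lemma mem_augOn_iff {f : ClosureOp E} {L : Set (Finset E)} {s : Finset (E ⊕ Finset E)} :
    s ∈ f.augBergmanOn L ↔
      f.Indep (faceIndep s) ∧ (∀ F ∈ faceFlag s, f.IsProperFlat F) ∧
      (∀ F ∈ faceFlag s, ∀ G ∈ faceFlag s, F ⊆ G ∨ G ⊆ F) ∧
      (∀ F ∈ faceFlag s, f.cl (faceIndep s) ⊆ F) ∧
      (∀ F ∈ faceFlag s, F ∈ L) := by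
  constructor
  · rintro ⟨hA, hL⟩
    obtain ⟨h1, h2, h3, h4⟩ := mem_augBergman_iff.1 hA
    exact ⟨h1, h2, h3, h4, fun F hF => hL F (mem_faceFlag.1 hF)⟩
  · rintro ⟨h1, h2, h3, h4, h5⟩
    exact ⟨mem_augBergman_iff.2 ⟨h1, h2, h3, h4⟩,
      fun F hF => h5 F (mem_faceFlag.2 hF)⟩

end AugStruct

/-! ## The augmented Bergman complex of a matroid closure operator -/

section AugMain

variable {E : Type*} [Fintype E] [DecidableEq E] (M : Matroid E) (hE : M.E = Set.univ)

open ClosureOp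

lemma aug_down {L : Set (Finset E)} {s t : Finset (E ⊕ Finset E)}
    (hst : t ⊆ s) (hs : s ∈ (M.closureOp hE).augBergmanOn L) :
    t ∈ (M.closureOp hE).augBergmanOn L := by
  rw [mem_augOn_iff] at hs ⊢
  obtain ⟨h1, h2, h3, h4, h5⟩ := hs
  have hI := faceIndep_mono hst
  have hC := faceFlag_mono hst
  refine ⟨clOp_indep_subset M hE h1 hI, fun F hF => h2 F (hC hF),
    fun F hF G hG => h3 F (hC hF) G (hC hG),
    fun F hF => ((M.closureOp hE).cl_mono hI).trans (h4 F (hC hF)),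
    fun F hF => h5 F (hC hF)⟩

lemma aug_del_eq (f : ClosureOp E) (L : Set (Finset E)) (F0 : Finset E) :
    faceDeletion (f.augBergmanOn L) (Sum.inr F0) = f.augBergmanOn (L \ {F0}) := by
  ext s
  constructor
  · rintro ⟨⟨hA, hL⟩, hns⟩
    refine ⟨hA, fun F hF => ⟨hL F hF, fun he => ?_⟩⟩
    rw [Set.mem_singleton_iff] at he
    exact hns (he ▸ hF)
  · rintro ⟨hA, hL⟩
    exact ⟨⟨hA, fun F hF => (hL F hF).1⟩, fun hns => (hL F0 hns).2 rfl⟩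

lemma aug_link_eq (f : ClosureOp E) {L : Set (Finset E)} {F0 : Finset E}
    (hL : f.IsFlatUpperSet L) (hF0 : F0 ∈ L)
    (hmin : ∀ F ∈ L, F ⊆ F0 → F = F0) :
    faceLink (f.augBergmanOn L) (Sum.inr F0) =
      joinOn (fun x : E ⊕ Finset E => x.isLeft = true)
        (imageCpx Sum.inl {I : Finset E | f.Indep I ∧ f.cl I ⊆ F0})
        (imageCpx Sum.inr (chainCpx (openInt f F0 Finset.univ))) := by
  ext s
  constructor
  · rintro ⟨hns, hins⟩
    rw [mem_augOn_iff, faceIndep_insert_inr, faceFlag_insert_inr] at hins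
    obtain ⟨h1, h2, h3, h4, h5⟩ := hins
    have hF0flag : F0 ∉ faceFlag s := fun h => hns (mem_faceFlag.1 h)
    constructor
    · rw [filter_isLeft]
      exact ⟨faceIndep s, ⟨h1, h4 F0 (Finset.mem_insert_self _ _)⟩, rfl⟩
    · rw [filter_isRight]
      refine ⟨faceFlag s, ⟨?_, ?_⟩, rfl⟩
      · intro G hG
        have hGL : G ∈ L := h5 G (Finset.mem_insert_of_mem hG)
        have hGp := h2 G (Finset.mem_insert_of_mem hG)
        refine ⟨hGp.1, ?_, lt_of_le_of_ne (Finset.subset_univ G) hGp.2⟩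
        rcases h3 G (Finset.mem_insert_of_mem hG) F0 (Finset.mem_insert_self _ _)
          with h | h
        · exact absurd (hmin G hGL h)
            (fun he => hF0flag (by rw [← he]; exact hG))
        · exact lt_of_le_of_ne h (fun he => hF0flag (by rw [he]; exact hG))
      · intro G hG G' hG'
        exact h3 G (Finset.mem_insert_of_mem hG) G' (Finset.mem_insert_of_mem hG')
  · rintro ⟨hleft, hright⟩
    rw [filter_isLeft] at hleft
    rw [filter_isRight] at hright
    obtain ⟨I', hI', hIeq⟩ := hleft
    obtain ⟨C', hC', hCeq⟩ := hright
    have hIe : faceIndep s = I' :=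
      Finset.image_injective Sum.inl_injective hIeq
    have hCe : faceFlag s = C' :=
      Finset.image_injective Sum.inr_injective hCeq
    have hns : Sum.inr F0 ∉ s := by
      intro h
      have : F0 ∈ C' := hCe ▸ mem_faceFlag.2 h
      exact (lt_irrefl F0) (hC'.1 F0 this).2.1
    refine ⟨hns, ?_⟩
    rw [mem_augOn_iff, faceIndep_insert_inr, faceFlag_insert_inr, hIe, hCe]
    have hF0p : f.IsProperFlat F0 := hL.1 F0 hF0
    refine ⟨hI'.1, ?_, ?_, ?_, ?_⟩
    · intro F hF
      rcases Finset.mem_insert.1 hF with rfl | hFC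
      · exact hF0p
      · have := hC'.1 F hFC
        exact ⟨this.1, fun he => (lt_irrefl F) (he ▸ this.2.2)⟩
    · intro F hF G hG
      rcases Finset.mem_insert.1 hF with rfl | hFC <;>
        rcases Finset.mem_insert.1 hG with rfl | hGC
      · exact Or.inl (Finset.Subset.refl _)
      · exact Or.inl (hC'.1 G hGC).2.1.subset
      · exact Or.inr (hC'.1 F hFC).2.1.subset
      · exact hC'.2 F hFC G hGC
    · intro F hF
      rcases Finset.mem_insert.1 hF with rfl | hFC
      · exact hI'.2
      · exact hI'.2.trans (hC'.1 F hFC).2.1.subset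
    · intro F hF
      rcases Finset.mem_insert.1 hF with rfl | hFC
      · exact hF0
      · have := hC'.1 F hFC
        refine hL.2 F0 hF0 F ⟨this.1, fun he => (lt_irrefl F) (he ▸ this.2.2)⟩
          this.2.1.subset

lemma aug_facet {L : Set (Finset E)} {F0 : Finset E}
    (hL : (M.closureOp hE).IsFlatUpperSet L) (hF0 : F0 ∈ L)
    (hmin : ∀ F ∈ L, F ⊆ F0 → F = F0) :
    ∀ s, IsFacet (faceDeletion ((M.closureOp hE).augBergmanOn L) (Sum.inr F0)) s →
      IsFacet ((M.closureOp hE).augBergmanOn L) s := by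
  set f := M.closureOp hE with hfdef
  intro s hs
  refine ⟨hs.1.1, fun t ht hsub => ?_⟩
  have hts : t ⊆ insert (Sum.inr F0) s := by
    intro x hxt
    by_contra hxs
    rw [Finset.mem_insert] at hxs
    push_neg at hxs
    obtain ⟨hx0, hxs⟩ := hxs
    have hmem : insert x s ∈ faceDeletion (f.augBergmanOn L) (Sum.inr F0) := by
      refine ⟨aug_down M hE (Finset.insert_subset hxt hsub) ht, ?_⟩
      rw [Finset.mem_insert]
      rintro (he | h)
      · exact hx0 he.symm
      · exact hs.1.2 h
    have heq := hs.2 _ hmem (Finset.subset_insert _ _)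
    exact hxs (heq ▸ Finset.mem_insert_self x s)
  by_cases h0t : Sum.inr F0 ∈ t
  swap
  · refine Finset.Subset.antisymm hsub (fun x hxt => ?_)
    rcases Finset.mem_insert.1 (hts hxt) with rfl | h
    · exact absurd hxt h0t
    · exact h
  · exfalso
    have h0s : Sum.inr F0 ∉ s := hs.1.2
    have hins : insert (Sum.inr F0) s ∈ f.augBergmanOn L :=
      aug_down M hE (Finset.insert_subset h0t hsub) ht
    rw [mem_augOn_iff, faceIndep_insert_inr, faceFlag_insert_inr] at hins
    obtain ⟨h1, h2, h3, h4, h5⟩ := hins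
    have hclF0 : f.cl (faceIndep s) ⊆ F0 := h4 F0 (Finset.mem_insert_self _ _)
    obtain ⟨hsI, hsP, hsch, hscl, hsL⟩ := mem_augOn_iff.1 hs.1.1
    by_cases hCne : (faceFlag s).Nonempty
    · obtain ⟨Gm, hGm, hGmmin⟩ :=
        Finset.exists_min_image (faceFlag s) Finset.card hCne
      have hGmbot : ∀ G ∈ faceFlag s, Gm ⊆ G := by
        intro G hG
        rcases hsch Gm hGm G hG with h | h
        · exact h
        · rw [Finset.eq_of_subset_of_card_le h (hGmmin G hG)]
      have hF0Gm : F0 ⊂ Gm := by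
        have hGmL : Gm ∈ L := hsL Gm hGm
        rcases h3 Gm (Finset.mem_insert_of_mem hGm) F0 (Finset.mem_insert_self _ _)
          with h | h
        · exact absurd (hmin Gm hGmL h)
            (fun he => h0s (mem_faceFlag.1 (by rw [← he]; exact hGm)))
        · exact lt_of_le_of_ne h
            (fun he => h0s (mem_faceFlag.1 (by rw [he]; exact hGm)))
      obtain ⟨i, hiGm, hiF0⟩ := Finset.exists_of_ssubset hF0Gm
      have hicl : i ∉ f.cl (faceIndep s) := fun h => hiF0 (hclF0 h)
      have hii : Sum.inl i ∉ s := by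
        intro h
        exact hicl (f.subset_cl _ (mem_faceIndep.2 h))
      have hmem : insert (Sum.inl i) s ∈ faceDeletion (f.augBergmanOn L) (Sum.inr F0) := by
        refine ⟨?_, ?_⟩
        · rw [mem_augOn_iff, faceIndep_insert_inl, faceFlag_insert_inl]
          refine ⟨clOp_insert_indep M hE hsI hicl, hsP, hsch, ?_, hsL⟩
          intro G hG
          have hGflat : f.cl G = G := (hsP G hG).1
          have hsubG : insert i (faceIndep s) ⊆ G := by
            refine Finset.insert_subset (hGmbot G hG hiGm) ?_
            exact ((f.subset_cl _).trans hclF0).trans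
              (hF0Gm.subset.trans (hGmbot G hG))
          have := f.cl_mono hsubG
          rwa [hGflat] at this
        · rw [Finset.mem_insert]
          rintro (he | h)
          · cases he
          · exact h0s h
      have heq := hs.2 _ hmem (Finset.subset_insert _ _)
      exact hii (heq ▸ Finset.mem_insert_self _ s)
    · have hF0univ : F0 ≠ Finset.univ := (hL.1 F0 hF0).2
      obtain ⟨i, hiF0⟩ : ∃ i, i ∉ F0 := by
        by_contra h
        push_neg at h
        exact hF0univ (Finset.eq_univ_iff_forall.2 h)
      have hicl : i ∉ f.cl (faceIndep s) := fun h => hiF0 (hclF0 h)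
      have hii : Sum.inl i ∉ s := by
        intro h
        exact hicl (f.subset_cl _ (mem_faceIndep.2 h))
      have hCemp : faceFlag s = ∅ := Finset.not_nonempty_iff_eq_empty.1 hCne
      have hmem : insert (Sum.inl i) s ∈ faceDeletion (f.augBergmanOn L) (Sum.inr F0) := by
        refine ⟨?_, ?_⟩
        · rw [mem_augOn_iff, faceIndep_insert_inl, faceFlag_insert_inl, hCemp]
          refine ⟨clOp_insert_indep M hE hsI hicl, ?_, ?_, ?_, ?_⟩ <;>
            intro G hG <;> exact absurd hG (Finset.notMem_empty G)
        · rw [Finset.mem_insert]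
          rintro (he | h)
          · cases he
          · exact h0s h
      have heq := hs.2 _ hmem (Finset.subset_insert _ _)
      exact hii (heq ▸ Finset.mem_insert_self _ s)

lemma faceIndep_singleton_inr {F : Finset E} :
    faceIndep ({Sum.inr F} : Finset (E ⊕ Finset E)) = ∅ := by
  ext x; simp [mem_faceIndep]

lemma faceFlag_singleton_inr {F : Finset E} :
    faceFlag ({Sum.inr F} : Finset (E ⊕ Finset E)) = {F} := by
  ext G; simp [mem_faceFlag]

lemma faceIndep_image_inl {I : Finset E} :
    faceIndep (I.image Sum.inl : Finset (E ⊕ Finset E)) = I := by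
  ext x; simp [mem_faceIndep]

lemma faceFlag_image_inl {I : Finset E} :
    faceFlag (I.image Sum.inl : Finset (E ⊕ Finset E)) = ∅ := by
  ext G; simp [mem_faceFlag]

lemma vd_IC {F1 : Finset E} (hflat : (M.closureOp hE).cl F1 = F1) :
    IsVertexDecomposable
      {I : Finset E | (M.closureOp hE).Indep I ∧ (M.closureOp hE).cl I ⊆ F1} := by
  refine vd_of_exchange _ _ ?_ ?_ ?_ le_rfl
  · refine ⟨clOp_indep_empty M hE, ?_⟩
    have := (M.closureOp hE).cl_mono (Finset.empty_subset F1)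
    rwa [hflat] at this
  · intro u t hut ht
    exact ⟨clOp_indep_subset M hE ht.1 hut, ((M.closureOp hE).cl_mono hut).trans ht.2⟩
  · intro u t hu ht hc
    obtain ⟨x, hxt, hxu, hind⟩ := clOp_augment M hE hu.1 ht.1 hc
    refine ⟨x, hxt, hxu, hind, ?_⟩
    have hsub : insert x u ⊆ F1 :=
      Finset.insert_subset (ht.2 ((M.closureOp hE).subset_cl t hxt))
        (((M.closureOp hE).subset_cl u).trans hu.2)
    have := (M.closureOp hE).cl_mono hsub
    rwa [hflat] at this

lemma vd_indepCpx :
    IsVertexDecomposable {I : Finset E | (M.closureOp hE).Indep I} := by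
  have h : {I : Finset E | (M.closureOp hE).Indep I} =
      {I : Finset E | (M.closureOp hE).Indep I ∧
        (M.closureOp hE).cl I ⊆ Finset.univ} := by
    ext I
    exact ⟨fun hI => ⟨hI, Finset.subset_univ _⟩, fun hI => hI.1⟩
  rw [h]
  exact vd_IC M hE (clOp_univ_flat M hE)

lemma vd_linkJoin {F1 : Finset E} (hF1 : (M.closureOp hE).IsProperFlat F1) :
    IsVertexDecomposable
      (joinOn (fun x : E ⊕ Finset E => x.isLeft = true)
        (imageCpx Sum.inl
          {I : Finset E | (M.closureOp hE).Indep I ∧ (M.closureOp hE).cl I ⊆ F1})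
        (imageCpx Sum.inr (chainCpx (openInt (M.closureOp hE) F1 Finset.univ)))) := by
  refine vd_join (vd_image Sum.inl_injective (vd_IC M hE hF1.1))
    (vd_image Sum.inr_injective ?_) ?_ ?_
  · exact chain_vd (M.closureOp hE) (clOp_exch M hE) _ F1 Finset.univ hF1.1
      (clOp_univ_flat M hE) (lt_of_le_of_ne (Finset.subset_univ _) hF1.2) le_rfl
  · rintro a ⟨u, hu, rfl⟩ x hx
    obtain ⟨y, hy, rfl⟩ := Finset.mem_image.1 hx
    rfl
  · rintro b ⟨u, hu, rfl⟩ x hx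
    obtain ⟨y, hy, rfl⟩ := Finset.mem_image.1 hx
    simp

lemma upper_minus {L : Set (Finset E)} {F0 : Finset E}
    (hL : (M.closureOp hE).IsFlatUpperSet L)
    (hmin : ∀ F ∈ L, F ⊆ F0 → F = F0) :
    (M.closureOp hE).IsFlatUpperSet (L \ {F0}) := by
  refine ⟨fun F hF => hL.1 F hF.1, fun F hF F' hp hsub => ⟨hL.2 F hF.1 F' hp hsub, ?_⟩⟩
  intro he
  rw [Set.mem_singleton_iff] at he
  subst he
  exact hF.2 (Set.mem_singleton_iff.2 (hmin F hF.1 hsub))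

lemma aug_vd : ∀ (n : ℕ) (L : Set (Finset E)), (M.closureOp hE).IsFlatUpperSet L →
    L.ncard ≤ n → IsVertexDecomposable ((M.closureOp hE).augBergmanOn L) := by
  intro n
  induction n using Nat.strong_induction_on with
  | _ n ih =>
  intro L hL hcard
  by_cases hLe : L = ∅
  · have hEq : (M.closureOp hE).augBergmanOn ∅ =
        imageCpx Sum.inl {I : Finset E | (M.closureOp hE).Indep I} := by
      ext s
      constructor
      · intro hsm
        obtain ⟨h1, h2, h3, h4, h5⟩ := mem_augOn_iff.1 hsm
        have hCemp : faceFlag s = ∅ := by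
          by_contra h
          obtain ⟨F, hF⟩ := Finset.nonempty_iff_ne_empty.2 h
          exact h5 F hF
        refine ⟨faceIndep s, h1, ?_⟩
        conv_lhs => rw [← face_decomp s]
        rw [hCemp, Finset.image_empty, Finset.union_empty]
      · rintro ⟨I, hI, rfl⟩
        rw [mem_augOn_iff, faceIndep_image_inl, faceFlag_image_inl]
        refine ⟨hI, ?_, ?_, ?_, ?_⟩ <;>
          intro G hG <;> exact absurd hG (Finset.notMem_empty G)
    rw [hLe, hEq]
    exact vd_image Sum.inl_injective (vd_indepCpx M hE)
  · have hfin : L.Finite := Set.toFinite L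
    obtain ⟨F1, hF1L, hF1min⟩ :=
      Set.Finite.exists_minimalFor Finset.card L hfin
        (Set.nonempty_iff_ne_empty.2 hLe)
    have hmin : ∀ F ∈ L, F ⊆ F1 → F = F1 := by
      intro F hF hsub
      have h1 : F.card ≤ F1.card := Finset.card_le_card hsub
      have h2 := hF1min hF h1
      exact Finset.eq_of_subset_of_card_le hsub h2
    refine IsVertexDecomposable.step _ (Sum.inr F1) ?_ ?_ ?_ ?_
    · rw [mem_augOn_iff, faceIndep_singleton_inr, faceFlag_singleton_inr]
      refine ⟨clOp_indep_empty M hE, ?_, ?_, ?_, ?_⟩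
      · intro F hF
        rw [Finset.mem_singleton] at hF
        exact hF ▸ hL.1 F1 hF1L
      · intro F hF G hG
        rw [Finset.mem_singleton] at hF hG
        rw [hF, hG]
        exact Or.inl (Finset.Subset.refl _)
      · intro F hF
        rw [Finset.mem_singleton] at hF
        subst hF
        have := (M.closureOp hE).cl_mono (Finset.empty_subset F)
        rwa [(hL.1 F hF1L).1] at this
      · intro F hF
        rw [Finset.mem_singleton] at hF
        exact hF ▸ hF1L
    · rw [aug_del_eq]
      refine ih (L \ {F1}).ncard
        (lt_of_lt_of_le (Set.ncard_diff_singleton_lt_of_mem hF1L hfin) hcard) _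
        (upper_minus M hE hL hmin) le_rfl
    · rw [aug_link_eq (M.closureOp hE) hL hF1L hmin]
      exact vd_linkJoin M hE (hL.1 F1 hF1L)
    · exact aug_facet M hE hL hF1L hmin

end AugMain


/-- For a matroid `M`, a nonempty upper-set `L` of proper flats and a
minimal element `F₀` of `L`, the vertex `x_{F₀}` is a decomposing vertex of `Δ_M(L)`:
its deletion and link are vertex decomposable, and every facet of the deletion is a
facet of `Δ_M(L)`. -/
theorem minimal_flat_is_decomposing_vertex
    {E : Type*} [Fintype E] [DecidableEq E] (M : Matroid E) (hE : M.E = Set.univ)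
    (L : Set (Finset E)) (hL : (M.closureOp hE).IsFlatUpperSet L)
    (F0 : Finset E) (hF0 : F0 ∈ L) (hmin : ∀ F ∈ L, F ⊆ F0 → F = F0) :
    IsVertexDecomposable
        (faceDeletion ((M.closureOp hE).augBergmanOn L) (Sum.inr F0)) ∧
    IsVertexDecomposable
        (faceLink ((M.closureOp hE).augBergmanOn L) (Sum.inr F0)) ∧
    ∀ s, IsFacet (faceDeletion ((M.closureOp hE).augBergmanOn L) (Sum.inr F0)) s →
      IsFacet ((M.closureOp hE).augBergmanOn L) s := by
  refine ⟨?_, ?_, aug_facet M hE hL hF0 hmin⟩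
  · rw [aug_del_eq]
    exact aug_vd M hE (L \ {F0}).ncard _ (upper_minus M hE hL hmin) le_rfl
  · rw [aug_link_eq (M.closureOp hE) hL hF0 hmin]
    exact vd_linkJoin M hE (hL.1 F0 hF0)
end

section
/- Let M be a matroid on a finite ground set E, let L be a nonempty upper-set of proper flats of M, and let F_0 be a minimal element of L. Then x_{F_0} is a shedding vertex of Δ_M(L): for every facet σ of Δ_M(L) containing x_{F_0}, there is another facet τ of Δ_M(L) with σ \ τ = {x_{F_0}}. -/
open Finset

/-! ## Auxiliary lemmas for Statement 4 -/

section Aux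

variable {E : Type*} [Fintype E] [DecidableEq E]

lemma mem_closureOp_cl_iff (M : Matroid E) (hE : M.E = Set.univ) (A : Finset E) (x : E) :
    x ∈ (M.closureOp hE).cl A ↔ x ∈ M.closure ↑A :=
  Set.Finite.mem_toFinset _

lemma closureOp_indep_iff (M : Matroid E) (hE : M.E = Set.univ) (I : Finset E) :
    (M.closureOp hE).Indep I ↔ M.Indep ↑I := by
  have key : ∀ i : E, ((M.closureOp hE).cl (I.erase i) ⊂ (M.closureOp hE).cl I ↔
      M.closure (↑I \ {i}) ⊂ M.closure ↑I) := by
    intro i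
    rw [show ((↑I : Set E) \ {i}) = ↑(I.erase i) by simp [Finset.coe_erase]]
    exact Set.Finite.toFinset_ssubset_toFinset ..
  constructor
  · intro h
    rw [Matroid.indep_iff_forall_closure_diff_ne]
    intro e he
    exact ((key e).1 (h e he)).ne
  · intro h i hi
    exact (key i).2 (h.closure_diff_singleton_ssubset hi)

lemma chain_insert_aux {α : Type*} [DecidableEq α] {C : Finset (Finset α)} {H : Finset α}
    (hC : ∀ F ∈ C, ∀ G ∈ C, F ⊆ G ∨ G ⊆ F) (hH : ∀ K ∈ C, H ⊆ K ∨ K ⊆ H) :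
    ∀ F ∈ insert H C, ∀ G ∈ insert H C, F ⊆ G ∨ G ⊆ F := by
  intro F hF G hG
  rcases Finset.mem_insert.1 hF with h | h
  · rw [h]
    rcases Finset.mem_insert.1 hG with h' | h'
    · rw [h']
      exact Or.inl (Finset.Subset.refl _)
    · exact hH G h'
  · rcases Finset.mem_insert.1 hG with h' | h'
    · rw [h']
      exact (hH F h).symm
    · exact hC F h G h'

end Aux

/-- For a matroid `M`, a nonempty upper-set `L` of proper flats and a
minimal element `F₀` of `L`, the vertex `x_{F₀}` is a shedding vertex of `Δ_M(L)`: for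
every facet `σ` containing `x_{F₀}` there is another facet `τ` with `σ \ τ = {x_{F₀}}`. -/
theorem minimal_flat_is_shedding_vertex
    {E : Type*} [Fintype E] [DecidableEq E] (M : Matroid E) (hE : M.E = Set.univ)
    (L : Set (Finset E)) (hL : (M.closureOp hE).IsFlatUpperSet L)
    (F0 : Finset E) (hF0 : F0 ∈ L) (hmin : ∀ F ∈ L, F ⊆ F0 → F = F0) :
    ∀ σ : Finset (E ⊕ Finset E),
      IsFacet ((M.closureOp hE).augBergmanOn L) σ →
      Sum.inr F0 ∈ σ →
      ∃ τ, IsFacet ((M.closureOp hE).augBergmanOn L) τ ∧ τ ≠ σ ∧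
        σ \ τ = {Sum.inr F0} := by
  classical
  intro sg hsg hF0s
  set f := M.closureOp hE with hf
  obtain ⟨hsgD, hsgmax⟩ := hsg
  obtain ⟨hsgA, hsgL⟩ := hsgD
  obtain ⟨I, C, hdec, hI, hCflat, hCchain, hclI⟩ := hsgA
  have hmem_inl : ∀ a : E, Sum.inl a ∈ sg ↔ a ∈ I := by
    intro a; rw [hdec]; simp
  have hmem_inr : ∀ F : Finset E, Sum.inr F ∈ sg ↔ F ∈ C := by
    intro F; rw [hdec]; simp
  have hF0C : F0 ∈ C := (hmem_inr F0).1 hF0s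
  have hext : ∀ v ∉ sg, insert v sg ∈ f.augBergmanOn L → False := by
    intro v hv hins
    have := hsgmax _ hins (Finset.subset_insert _ _)
    exact hv (this ▸ Finset.mem_insert_self v sg)
  have hF0P := hL.1 F0 hF0
  have hF0flat : f.cl F0 = F0 := hF0P.1
  have hF0ne : F0 ≠ Finset.univ := hF0P.2
  have hF0min : ∀ F ∈ C, F0 ⊆ F := by
    intro F hFC
    rcases hCchain F hFC F0 hF0C with h | h
    · exact le_of_eq (hmin F (hsgL F ((hmem_inr F).2 hFC)) h).symm
    · exact h
  have hclIF0 : f.cl I ⊆ F0 := hclI F0 hF0C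
  have hIind : M.Indep ↑I := (closureOp_indep_iff M hE I).1 hI
  -- cl I = F0
  have hclIeq : f.cl I = F0 := by
    refine Finset.Subset.antisymm hclIF0 ?_
    intro x hxF0
    by_contra hx
    have hxI : x ∉ I := fun h => hx (f.subset_cl I h)
    have hxcl : x ∉ M.closure ↑I := fun h => hx ((mem_closureOp_cl_iff M hE I x).2 h)
    have hins : M.Indep (insert x ↑I) := by
      rw [hIind.insert_indep_iff_of_notMem (by simpa using hxI)]
      exact ⟨by simp [hE], hxcl⟩
    have hfins : f.Indep (insert x I) := by
      rw [hf, closureOp_indep_iff M hE]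
      simpa using hins
    have hsub : insert x I ⊆ F0 := by
      intro a ha
      rcases Finset.mem_insert.1 ha with rfl | ha
      · exact hxF0
      · exact hclIF0 (f.subset_cl I ha)
    refine hext (Sum.inl x) (fun h => hxI ((hmem_inl x).1 h)) ?_
    refine ⟨⟨insert x I, C, ?_, hfins, hCflat, hCchain, ?_⟩, ?_⟩
    · rw [hdec, Finset.image_insert, Finset.insert_union]
    · intro F hFC
      calc f.cl (insert x I) ⊆ f.cl F0 := f.cl_mono hsub
        _ = F0 := hF0flat
        _ ⊆ F := hF0min F hFC
    · intro F hF
      rcases Finset.mem_insert.1 hF with h | h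
      · exact absurd h (by simp)
      · exact hsgL F h
  set C' := C.erase F0 with hC'def
  have hC'sub : C' ⊆ C := Finset.erase_subset _ _
  -- choose G : the minimum of C' if nonempty, else univ
  obtain ⟨G, hGflat, hGmem, hGF0, hGmin, hGuniv⟩ :
      ∃ G : Finset E, f.cl G = G ∧ (C'.Nonempty → G ∈ C') ∧ F0 ⊂ G ∧
        (∀ F ∈ C', G ⊆ F) ∧ (¬C'.Nonempty → G = Finset.univ) := by
    by_cases hne : C'.Nonempty
    · obtain ⟨G, hGC', hGminimal⟩ : ∃ G ∈ C', ∀ F ∈ C', ¬ F < G := by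
        obtain ⟨G, hG⟩ := Finset.exists_minimal hne
        exact ⟨G, hG.1, fun F hF => hG.not_lt hF⟩
      have hGmin : ∀ F ∈ C', G ⊆ F := by
        intro F hF
        rcases hCchain G (hC'sub hGC') F (hC'sub hF) with h | h
        · exact h
        · rcases eq_or_ne F G with rfl | hFG
          · exact Finset.Subset.refl _
          · exact absurd (lt_of_le_of_ne h hFG) (hGminimal F hF)
      refine ⟨G, (hCflat G (hC'sub hGC')).1, fun _ => hGC', ?_, hGmin, fun h => absurd hne h⟩
      exact lt_of_le_of_ne (hF0min G (hC'sub hGC')) (Ne.symm (Finset.mem_erase.1 hGC').1)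
    · refine ⟨Finset.univ, ?_, fun h => absurd h hne, ?_, ?_, fun _ => rfl⟩
      · exact Finset.Subset.antisymm (Finset.subset_univ _) (f.subset_cl _)
      · exact lt_of_le_of_ne (Finset.subset_univ _) hF0ne
      · intro F hF; exact absurd ⟨F, hF⟩ hne
  -- no proper flat strictly between F0 and G
  have hnobetween : ∀ H : Finset E, f.cl H = H → F0 ⊂ H → H ⊂ G → False := by
    intro H hHflat hH1 hH2
    have hHne : H ≠ Finset.univ := by
      intro h; subst h
      exact hH2.ne (Finset.univ_subset_iff.1 hH2.subset).symm
    have hHC : H ∉ C := by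
      intro hHC
      rcases eq_or_ne H F0 with rfl | hne0
      · exact hH1.ne rfl
      · exact hH2.2 (hGmin H (Finset.mem_erase.2 ⟨hne0, hHC⟩))
    have hHcmp : ∀ K ∈ C, H ⊆ K ∨ K ⊆ H := by
      intro K hK
      rcases eq_or_ne K F0 with rfl | hne0
      · exact Or.inr hH1.subset
      · exact Or.inl (hH2.subset.trans (hGmin K (Finset.mem_erase.2 ⟨hne0, hK⟩)))
    refine hext (Sum.inr H) (fun h => hHC ((hmem_inr H).1 h)) ?_
    refine ⟨⟨I, insert H C, ?_, hI, ?_, chain_insert_aux hCchain hHcmp, ?_⟩, ?_⟩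
    · rw [hdec, Finset.image_insert, Finset.union_insert]
    · intro F hF
      rcases Finset.mem_insert.1 hF with h | h
      · rw [h]
        exact ⟨hHflat, hHne⟩
      · exact hCflat F h
    · intro F hF
      rcases Finset.mem_insert.1 hF with h | h
      · rw [h, hclIeq]
        exact hH1.subset
      · exact hclI F h
    · intro F hF
      rcases Finset.mem_insert.1 hF with h | h
      · have hHF : H = F := Sum.inr.inj h.symm
        exact hHF ▸ hL.2 F0 hF0 H ⟨hHflat, hHne⟩ hH1.subset
      · exact hsgL F h
  obtain ⟨i, hiG, hiF0⟩ := Finset.exists_of_ssubset hGF0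
  have hiI : i ∉ I := fun h => hiF0 (hclIeq ▸ f.subset_cl I h)
  have hicl : i ∉ M.closure ↑I := fun h =>
    hiF0 (hclIeq ▸ (mem_closureOp_cl_iff M hE I i).2 h)
  have hinsind : M.Indep (insert i ↑I) := by
    rw [hIind.insert_indep_iff_of_notMem (by simpa using hiI)]
    exact ⟨by simp [hE], hicl⟩
  have hfins : f.Indep (insert i I) := by
    rw [hf, closureOp_indep_iff M hE]
    simpa using hinsind
  have hIG : insert i I ⊆ G := by
    intro a ha
    rcases Finset.mem_insert.1 ha with rfl | ha
    · exact hiG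
    · exact hGF0.subset (hclIeq ▸ f.subset_cl I ha)
  have hclins : f.cl (insert i I) = G := by
    have hsubG : f.cl (insert i I) ⊆ G := by
      calc f.cl (insert i I) ⊆ f.cl G := f.cl_mono hIG
        _ = G := hGflat
    rcases eq_or_ne (f.cl (insert i I)) G with h | h
    · exact h
    · exfalso
      refine hnobetween (f.cl (insert i I)) (f.cl_idem _) ?_ (lt_of_le_of_ne hsubG h)
      refine lt_of_le_of_ne (hclIeq ▸ f.cl_mono (Finset.subset_insert i I)) ?_
      intro heq
      exact hiF0 (heq ▸ f.subset_cl _ (Finset.mem_insert_self i I))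
  -- the new facet
  refine ⟨(insert i I).image Sum.inl ∪ C'.image Sum.inr, ⟨⟨?_, ?_⟩, ?_⟩, ?_, ?_⟩
  · exact ⟨insert i I, C', rfl, hfins,
      fun F hF => hCflat F (hC'sub hF),
      fun F hF F' hF' => hCchain F (hC'sub hF) F' (hC'sub hF'),
      fun F hF => hclins ▸ hGmin F hF⟩
  · intro F hF
    rcases Finset.mem_union.1 hF with h | h
    · obtain ⟨a, _, ha⟩ := Finset.mem_image.1 h
      exact absurd ha (by simp)
    · obtain ⟨K, hK, hKe⟩ := Finset.mem_image.1 h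
      obtain rfl : K = F := Sum.inr.inj hKe
      exact hsgL K ((hmem_inr K).2 (hC'sub hK))
  · -- maximality
    intro t ht hsub
    obtain ⟨⟨J, D, htdec, hJ, hDflat, hDchain, hclJ⟩, htL⟩ := ht
    have hmemt_inl : ∀ a : E, Sum.inl a ∈ t ↔ a ∈ J := by
      intro a; rw [htdec]; simp
    have hmemt_inr : ∀ F : Finset E, Sum.inr F ∈ t ↔ F ∈ D := by
      intro F; rw [htdec]; simp
    have hJsup : insert i I ⊆ J := by
      intro a ha
      have h1 : Sum.inl a ∈ (insert i I).image Sum.inl ∪ C'.image Sum.inr :=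
        Finset.mem_union_left _ (Finset.mem_image_of_mem Sum.inl ha)
      exact (hmemt_inl a).1 (hsub h1)
    have hDsup : C' ⊆ D := by
      intro F hF
      have h1 : Sum.inr F ∈ (insert i I).image Sum.inl ∪ C'.image Sum.inr :=
        Finset.mem_union_right _ (Finset.mem_image_of_mem Sum.inr hF)
      exact (hmemt_inr F).1 (hsub h1)
    have hGclJ : G ⊆ f.cl J := hclins ▸ f.cl_mono hJsup
    have hDC' : D ⊆ C' := by
      intro F hFD
      by_contra hFC'
      have hGF : G ⊆ F := hGclJ.trans (hclJ F hFD)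
      by_cases hne : C'.Nonempty
      · -- extend sg by inr F : contradiction with maximality of sg
        have hFC : F ∉ C := by
          intro hFC
          rcases eq_or_ne F F0 with rfl | hne0
          · exact hiF0 (hGF hiG)
          · exact hFC' (Finset.mem_erase.2 ⟨hne0, hFC⟩)
        have hFcmp : ∀ P ∈ C, F ⊆ P ∨ P ⊆ F := by
          intro P hP
          rcases eq_or_ne P F0 with rfl | hne0
          · exact Or.inr (hGF0.subset.trans hGF)
          · exact hDchain F hFD P (hDsup (Finset.mem_erase.2 ⟨hne0, hP⟩))
        refine hext (Sum.inr F) (fun h => hFC ((hmem_inr F).1 h)) ?_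
        refine ⟨⟨I, insert F C, ?_, hI, ?_, chain_insert_aux hCchain hFcmp, ?_⟩, ?_⟩
        · rw [hdec, Finset.image_insert, Finset.union_insert]
        · intro K hK
          rcases Finset.mem_insert.1 hK with h | h
          · rw [h]
            exact hDflat F hFD
          · exact hCflat K h
        · intro K hK
          rcases Finset.mem_insert.1 hK with h | h
          · rw [h, hclIeq]
            exact hGF0.subset.trans hGF
          · exact hclI K h
        · intro K hK
          rcases Finset.mem_insert.1 hK with h | h
          · have hFK : F = K := Sum.inr.inj h.symm
            exact hFK ▸ htL F ((hmemt_inr F).2 hFD)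
          · exact hsgL K h
      · have hGu := hGuniv hne
        exact (hDflat F hFD).2 (Finset.univ_subset_iff.1 (hGu ▸ hGF))
    have hJsub : J ⊆ insert i I := by
      intro j hjJ
      by_contra hj
      have hsub2 : insert i I ⊆ J.erase j := fun a ha =>
        Finset.mem_erase.2 ⟨fun h => hj (h ▸ ha), hJsup ha⟩
      have h1 : G ⊆ f.cl (J.erase j) := hclins ▸ f.cl_mono hsub2
      have h2 : f.cl J ⊆ G := by
        by_cases hne : C'.Nonempty
        · exact hclJ G (hDsup (hGmem hne))
        · exact (hGuniv hne) ▸ Finset.subset_univ _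
      have hss := hJ j hjJ
      exact hss.ne (Finset.Subset.antisymm hss.subset (h2.trans h1))
    have hJeq : J = insert i I := Finset.Subset.antisymm hJsub hJsup
    have hDeq : D = C' := Finset.Subset.antisymm hDC' hDsup
    rw [htdec, hJeq, hDeq]
  · -- τ ≠ σ
    intro h
    have hmem : Sum.inr F0 ∈ (insert i I).image Sum.inl ∪ C'.image Sum.inr := h ▸ hF0s
    rcases Finset.mem_union.1 hmem with h' | h'
    · obtain ⟨a, _, ha⟩ := Finset.mem_image.1 h'
      exact absurd ha (by simp)
    · obtain ⟨K, hK, hKe⟩ := Finset.mem_image.1 h'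
      obtain rfl : K = F0 := Sum.inr.inj hKe
      exact (Finset.mem_erase.1 hK).1 rfl
  · -- σ \ τ = {x_{F0}}
    ext v
    simp only [Finset.mem_sdiff, Finset.mem_singleton]
    constructor
    · rintro ⟨hvs, hvt⟩
      match v with
      | Sum.inl a =>
          exfalso
          refine hvt (Finset.mem_union_left _ ?_)
          exact Finset.mem_image_of_mem Sum.inl
            (Finset.mem_insert_of_mem ((hmem_inl a).1 hvs))
      | Sum.inr F =>
          have hFC : F ∈ C := (hmem_inr F).1 hvs
          have hFC' : F ∉ C' := fun h =>
            hvt (Finset.mem_union_right _ (Finset.mem_image_of_mem Sum.inr h))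
          rcases eq_or_ne F F0 with rfl | hne0
          · rfl
          · exact absurd (Finset.mem_erase.2 ⟨hne0, hFC⟩) hFC'
    · rintro rfl
      refine ⟨hF0s, ?_⟩
      intro h
      rcases Finset.mem_union.1 h with h' | h'
      · obtain ⟨a, _, ha⟩ := Finset.mem_image.1 h'
        exact absurd ha (by simp)
      · obtain ⟨K, hK, hKe⟩ := Finset.mem_image.1 h'
        obtain rfl : K = F0 := Sum.inr.inj hKe
        exact (Finset.mem_erase.1 hK).1 rfl
end

section
/- Let f be a closure operator on a finite set E and let F be a proper flat of f. Then the link of the vertex x_F in the augmented Bergman complex Δ̂(f) is isomorphic to the join Δ̂(f|_F) ∗ Δ(f/F) of the augmented Bergman complex of the restriction f|_F with the Bergman complex of the contraction f/F. -/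
open Finset

/-! ## Helpers -/

section Helpers

variable {E : Type*} [Fintype E] [DecidableEq E]

lemma subtype_val_image {p : E → Prop} [DecidablePred p] (s : Finset E) :
    (s.subtype p).image Subtype.val = s.filter p := by
  ext x; simp

lemma subtype_of_image_val {p : E → Prop} [DecidablePred p] (s : Finset {x // p x}) :
    (s.image Subtype.val).subtype p = s := by
  ext x
  rw [Finset.mem_subtype, Subtype.val_injective.mem_finset_image]

lemma subtype_ssubset_of_ssubset {p : E → Prop} [DecidablePred p] {A B : Finset E}
    (h : A ⊂ B) (hB : ∀ x ∈ B, p x) : A.subtype p ⊂ B.subtype p := by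
  refine ⟨Finset.subtype_mono h.1, fun hc => ?_⟩
  obtain ⟨x, hxB, hxA⟩ := Finset.exists_of_ssubset h
  have hm : (⟨x, hB x hxB⟩ : {x // p x}) ∈ B.subtype p := Finset.mem_subtype.mpr hxB
  exact hxA (Finset.mem_subtype.mp (hc hm))


lemma ssubset_of_subtype_ssubset {p : E → Prop} [DecidablePred p] {A B : Finset E}
    (hAB : A ⊆ B) (h : A.subtype p ⊂ B.subtype p) : A ⊂ B := by
  refine ⟨hAB, fun hc => ?_⟩
  obtain ⟨x, hxB, hxA⟩ := Finset.exists_of_ssubset h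
  exact hxA (Finset.mem_subtype.mpr (hc (Finset.mem_subtype.mp hxB)))

lemma eq_of_subtype_mem_eq {F A B : Finset E} (hA : A ⊆ F) (hB : B ⊆ F)
    (h : A.subtype (· ∈ F) = B.subtype (· ∈ F)) : A = B := by
  have h2 := congrArg (Finset.image Subtype.val) h
  rwa [subtype_val_image, subtype_val_image, Finset.filter_true_of_mem hA,
    Finset.filter_true_of_mem hB] at h2

lemma filter_not_union_self {F A : Finset E} (hFA : F ⊆ A) :
    A.filter (· ∉ F) ∪ F = A := by
  ext x
  simp only [Finset.mem_union, Finset.mem_filter]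
  constructor
  · rintro (⟨hx, _⟩ | hx)
    · exact hx
    · exact hFA hx
  · intro hx
    by_cases hxF : x ∈ F
    · exact Or.inr hxF
    · exact Or.inl ⟨hx, hxF⟩

lemma eq_of_subtype_notmem_eq {F A B : Finset E} (hA : F ⊆ A) (hB : F ⊆ B)
    (h : A.subtype (· ∉ F) = B.subtype (· ∉ F)) : A = B := by
  have h2 := congrArg (Finset.image Subtype.val) h
  rw [subtype_val_image, subtype_val_image] at h2
  rw [← filter_not_union_self hA, ← filter_not_union_self hB, h2]

namespace ClosureOp

lemma mem_link_iff (f : ClosureOp E) {F : Finset E} (hF : f.IsProperFlat F)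
    (s : Finset (E ⊕ Finset E)) :
    s ∈ faceLink f.augBergman (Sum.inr F) ↔
    ∃ (I : Finset E) (C : Finset (Finset E)),
      s = I.image Sum.inl ∪ C.image Sum.inr ∧ f.Indep I ∧ F ∉ C ∧
      (∀ G ∈ C, f.IsProperFlat G) ∧
      (∀ G ∈ C, ∀ G' ∈ C, G ⊆ G' ∨ G' ⊆ G) ∧
      (∀ G ∈ C, G ⊆ F ∨ F ⊆ G) ∧
      f.cl I ⊆ F ∧ (∀ G ∈ C, f.cl I ⊆ G) := by
  constructor
  · rintro ⟨hv, I, C', hshape, hind, hflat, hchain, hcl⟩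
    have hFC' : F ∈ C' := by
      have h1 : Sum.inr F ∈ insert (Sum.inr F) s := Finset.mem_insert_self _ _
      rw [hshape] at h1
      rcases Finset.mem_union.mp h1 with h | h
      · obtain ⟨i, _, hi⟩ := Finset.mem_image.mp h
        exact absurd hi (by simp)
      · obtain ⟨G, hG, hGe⟩ := Finset.mem_image.mp h
        obtain rfl := Sum.inr.inj hGe
        exact hG
    refine ⟨I, C'.erase F, ?_, hind, Finset.notMem_erase _ _,
      fun G hG => hflat G (Finset.mem_of_mem_erase hG),
      fun G hG G' hG' => hchain G (Finset.mem_of_mem_erase hG) G' (Finset.mem_of_mem_erase hG'),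
      fun G hG => (hchain G (Finset.mem_of_mem_erase hG) F hFC'),
      hcl F hFC', fun G hG => hcl G (Finset.mem_of_mem_erase hG)⟩
    ext v
    have hv' : v ∈ s ↔ v ∈ insert (Sum.inr F) s ∧ v ≠ Sum.inr F := by
      constructor
      · intro h
        exact ⟨Finset.mem_insert_of_mem h, fun hc => hv (hc ▸ h)⟩
      · rintro ⟨h, hne⟩
        rcases Finset.mem_insert.mp h with h | h
        · exact absurd h hne
        · exact h
    rw [hv', hshape]
    cases v with
    | inl i => simp
    | inr G =>
      simp only [Finset.mem_union, Finset.mem_image, Finset.mem_erase, ne_eq,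
        Sum.inr.injEq, Sum.inl.injEq, reduceCtorEq]
      constructor
      · rintro ⟨(⟨i, _, hi⟩ | ⟨G', hG', rfl⟩), hne⟩
        · exact absurd hi (by simp)
        · exact Or.inr ⟨G', ⟨fun hc => hne (by rw [hc]), hG'⟩, rfl⟩
      · rintro (⟨i, _, hi⟩ | ⟨G', ⟨hne, hG'⟩, rfl⟩)
        · exact absurd hi (by simp)
        · exact ⟨Or.inr ⟨G', hG', rfl⟩, hne⟩
  · rintro ⟨I, C, rfl, hind, hFC, hflat, hchain, hcomp, hclF, hclC⟩
    constructor
    · intro hc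
      rcases Finset.mem_union.mp hc with h | h
      · obtain ⟨i, _, hi⟩ := Finset.mem_image.mp h
        exact absurd hi (by simp)
      · obtain ⟨G, hG, hGe⟩ := Finset.mem_image.mp h
        obtain rfl := Sum.inr.inj hGe
        exact hFC hG
    · refine ⟨I, insert F C, ?_, hind, ?_, ?_, ?_⟩
      · ext v
        cases v with
        | inl i => simp
        | inr G => simp [or_comm]
      · intro G hG
        rcases Finset.mem_insert.mp hG with rfl | h
        · exact hF
        · exact hflat G h
      · intro G hG G' hG'
        rcases Finset.mem_insert.mp hG with rfl | h <;>
          rcases Finset.mem_insert.mp hG' with rfl | h'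
        · exact Or.inl (le_refl _)
        · exact (hcomp G' h').symm
        · exact hcomp G h
        · exact hchain G h G' h'
      · intro G hG
        rcases Finset.mem_insert.mp hG with rfl | h
        · exact hclF
        · exact hclC G h

end ClosureOp

/-- The vertex map. -/
def linkPhi {E : Type*} [Fintype E] [DecidableEq E] (F : Finset E) :
    E ⊕ Finset E → ({x // x ∈ F} ⊕ Finset {x // x ∈ F}) ⊕ Finset {x // x ∉ F} :=
  Sum.elim
    (fun i => if h : i ∈ F then Sum.inl (Sum.inl ⟨i, h⟩) else Sum.inr ∅)
    (fun G => if G ⊆ F then Sum.inl (Sum.inr (G.subtype (· ∈ F)))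
      else Sum.inr (G.subtype (· ∉ F)))

/-- The inverse vertex map. -/
def linkPsi {E : Type*} [Fintype E] [DecidableEq E] (F : Finset E) :
    ({x // x ∈ F} ⊕ Finset {x // x ∈ F}) ⊕ Finset {x // x ∉ F} → E ⊕ Finset E :=
  Sum.elim
    (Sum.elim (fun x => Sum.inl x.val) (fun A => Sum.inr (A.image Subtype.val)))
    (fun A => Sum.inr (A.image Subtype.val ∪ F))

lemma linkPhi_inl {F : Finset E} {i : E} (h : i ∈ F) :
    linkPhi F (Sum.inl i) = Sum.inl (Sum.inl ⟨i, h⟩) := by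
  simp [linkPhi, h]

lemma linkPhi_low {F G : Finset E} (h : G ⊆ F) :
    linkPhi F (Sum.inr G) = Sum.inl (Sum.inr (G.subtype (· ∈ F))) := by
  simp [linkPhi, h]

lemma linkPhi_high {F G : Finset E} (h : ¬ G ⊆ F) :
    linkPhi F (Sum.inr G) = Sum.inr (G.subtype (· ∉ F)) := by
  simp [linkPhi, h]

end Helpers


/-- For any closure operator `f` and proper flat `F`, the link of the
vertex `x_F` in the augmented Bergman complex `Δ̂(f)` is isomorphic to the join
`Δ̂(f|_F) ∗ Δ(f/F)`. -/
theorem link_augBergman_iso_join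
    {E : Type*} [Fintype E] [DecidableEq E] (f : ClosureOp E) (F : Finset E)
    (hF : f.IsProperFlat F) :
    ComplexIso (faceLink f.augBergman (Sum.inr F))
      (complexJoin (f.restrict F).augBergman ((f.contract F).bergman)) := by
  obtain ⟨hFflat, hFne⟩ := hF
  have decode : ∀ (I : Finset E) (C : Finset (Finset E)) (v : E ⊕ Finset E),
      v ∈ I.image Sum.inl ∪ C.image Sum.inr →
      (∃ i ∈ I, v = Sum.inl i) ∨ ∃ G ∈ C, v = Sum.inr G := by
    intro I C v hv
    rcases Finset.mem_union.mp hv with h | h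
    · obtain ⟨i, hi, rfl⟩ := Finset.mem_image.mp h
      exact Or.inl ⟨i, hi, rfl⟩
    · obtain ⟨G, hG, rfl⟩ := Finset.mem_image.mp h
      exact Or.inr ⟨G, hG, rfl⟩
  have hclEmpty : ((f.contract F).cl ∅ : Finset {x // x ∉ F}) = ∅ := by
    show (f.cl ((∅ : Finset {x // x ∉ F}).image Subtype.val ∪ F)).subtype (· ∉ F) = ∅
    rw [Finset.image_empty, Finset.empty_union, hFflat]
    ext x
    simp [Finset.mem_subtype, x.2]
  refine ⟨linkPhi F, ?_, ?_, ?_, ?_⟩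
  · -- injective on each face
    intro s hs
    rw [f.mem_link_iff ⟨hFflat, hFne⟩] at hs
    obtain ⟨I, C, rfl, hind, hFC, hflat, hchain, hcomp, hclF, hclC⟩ := hs
    have hIF : ∀ i ∈ I, i ∈ F := fun i hi => hclF (f.subset_cl I hi)
    intro x hx y hy hxy
    rcases decode I C x (Finset.mem_coe.mp hx) with ⟨i, hi, rfl⟩ | ⟨G, hG, rfl⟩ <;>
      rcases decode I C y (Finset.mem_coe.mp hy) with ⟨j, hj, rfl⟩ | ⟨G', hG', rfl⟩
    · rw [linkPhi_inl (hIF i hi), linkPhi_inl (hIF j hj)] at hxy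
      simp only [Sum.inl.injEq, Subtype.mk.injEq] at hxy
      rw [hxy]
    · rw [linkPhi_inl (hIF i hi)] at hxy
      by_cases hGF : G' ⊆ F
      · rw [linkPhi_low hGF] at hxy
        simp at hxy
      · rw [linkPhi_high hGF] at hxy
        simp at hxy
    · rw [linkPhi_inl (hIF j hj)] at hxy
      by_cases hGF : G ⊆ F
      · rw [linkPhi_low hGF] at hxy
        simp at hxy
      · rw [linkPhi_high hGF] at hxy
        simp at hxy
    · by_cases hGF : G ⊆ F <;> by_cases hG'F : G' ⊆ F
      · rw [linkPhi_low hGF, linkPhi_low hG'F] at hxy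
        simp only [Sum.inl.injEq, Sum.inr.injEq] at hxy
        rw [eq_of_subtype_mem_eq hGF hG'F hxy]
      · rw [linkPhi_low hGF, linkPhi_high hG'F] at hxy
        simp at hxy
      · rw [linkPhi_high hGF, linkPhi_low hG'F] at hxy
        simp at hxy
      · rw [linkPhi_high hGF, linkPhi_high hG'F] at hxy
        simp only [Sum.inr.injEq] at hxy
        rw [eq_of_subtype_notmem_eq ((hcomp G hG).resolve_left hGF)
          ((hcomp G' hG').resolve_left hG'F) hxy]
  · -- maps faces to faces
    intro s hs
    rw [f.mem_link_iff ⟨hFflat, hFne⟩] at hs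
    obtain ⟨I, C, rfl, hind, hFC, hflat, hchain, hcomp, hclF, hclC⟩ := hs
    have hIF : ∀ i ∈ I, i ∈ F := fun i hi => hclF (f.subset_cl I hi)
    set I' := I.subtype (· ∈ F) with hI'
    set Cl := C.filter (· ⊆ F) with hCl
    set Ch := C.filter (fun G => ¬ G ⊆ F) with hCh
    have hIval : I'.image Subtype.val = I := by
      rw [hI', subtype_val_image, Finset.filter_true_of_mem hIF]
    have hCsplit : Cl ∪ Ch = C := Finset.filter_union_filter_not_eq _ C
    refine ⟨I'.image Sum.inl ∪ (Cl.image (fun G => G.subtype (· ∈ F))).image Sum.inr,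
      ⟨I', Cl.image (fun G => G.subtype (· ∈ F)), rfl, ?_, ?_, ?_, ?_⟩,
      Ch.image (fun G => G.subtype (· ∉ F)), ⟨?_, ?_⟩, ?_⟩
    · -- Indep I'
      intro x hx
      have hxI : x.val ∈ I := Finset.mem_subtype.mp hx
      show (f.cl ((I'.erase x).image Subtype.val)).subtype (· ∈ F)
          ⊂ (f.cl (I'.image Subtype.val)).subtype (· ∈ F)
      have e1 : (I'.erase x).image Subtype.val = I.erase x.val := by
        rw [Finset.image_erase Subtype.val_injective, hIval]
      rw [e1, hIval]
      exact subtype_ssubset_of_ssubset (hind x.val hxI) fun y hy => hclF hy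
    · -- flats
      intro G'' hG''
      obtain ⟨G, hG, rfl⟩ := Finset.mem_image.mp hG''
      have hGC : G ∈ C := (Finset.mem_filter.mp hG).1
      have hGF : G ⊆ F := (Finset.mem_filter.mp hG).2
      constructor
      · show (f.cl ((G.subtype (· ∈ F)).image Subtype.val)).subtype (· ∈ F)
            = G.subtype (· ∈ F)
        rw [subtype_val_image, Finset.filter_true_of_mem hGF, (hflat G hGC).1]
      · intro hc
        have hFG : F ⊆ G := by
          intro y hy
          have hm : (⟨y, hy⟩ : {x // x ∈ F}) ∈ G.subtype (· ∈ F) := by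
            rw [hc]; exact Finset.mem_univ _
          exact Finset.mem_subtype.mp hm
        exact hFC (Finset.Subset.antisymm hGF hFG ▸ hGC)
    · -- chain
      intro A hA B hB
      obtain ⟨G, hG, rfl⟩ := Finset.mem_image.mp hA
      obtain ⟨G', hG', rfl⟩ := Finset.mem_image.mp hB
      rcases hchain G (Finset.mem_filter.mp hG).1 G' (Finset.mem_filter.mp hG').1 with h | h
      · exact Or.inl (Finset.subtype_mono h)
      · exact Or.inr (Finset.subtype_mono h)
    · -- closure containment
      intro A hA
      obtain ⟨G, hG, rfl⟩ := Finset.mem_image.mp hA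
      show (f.cl (I'.image Subtype.val)).subtype (· ∈ F) ⊆ G.subtype (· ∈ F)
      rw [hIval]
      exact Finset.subtype_mono (hclC G (Finset.mem_filter.mp hG).1)
    · -- bergman flats
      intro A hA
      obtain ⟨G, hG, rfl⟩ := Finset.mem_image.mp hA
      have hGC : G ∈ C := (Finset.mem_filter.mp hG).1
      have hGF : ¬ G ⊆ F := (Finset.mem_filter.mp hG).2
      have hFG : F ⊆ G := (hcomp G hGC).resolve_left hGF
      have hGval : (G.subtype (· ∉ F)).image Subtype.val ∪ F = G := by
        rw [subtype_val_image, filter_not_union_self hFG]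
      refine ⟨⟨?_, ?_⟩, ?_⟩
      · show (f.cl ((G.subtype (· ∉ F)).image Subtype.val ∪ F)).subtype (· ∉ F)
            = G.subtype (· ∉ F)
        rw [hGval, (hflat G hGC).1]
      · intro hc
        refine (hflat G hGC).2 (Finset.eq_univ_iff_forall.mpr fun x => ?_)
        by_cases hxF : x ∈ F
        · exact hFG hxF
        · have hm : (⟨x, hxF⟩ : {x // x ∉ F}) ∈ G.subtype (· ∉ F) := by
            rw [hc]; exact Finset.mem_univ _
          exact Finset.mem_subtype.mp hm
      · show (f.cl ((∅ : Finset {x // x ∉ F}).image Subtype.val ∪ F)).subtype (· ∉ F)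
            ⊂ G.subtype (· ∉ F)
        have he : (f.cl ((∅ : Finset {x // x ∉ F}).image Subtype.val ∪ F)).subtype (· ∉ F)
            = (∅ : Finset {x // x ∉ F}) := hclEmpty
        rw [he]
        have hssub : F ⊂ G := ⟨hFG, fun hc => hGF hc⟩
        obtain ⟨x, hxG, hxF⟩ := Finset.exists_of_ssubset hssub
        refine ⟨Finset.empty_subset _, fun hc => ?_⟩
        have hm : (⟨x, hxF⟩ : {x // x ∉ F}) ∈ (∅ : Finset {x // x ∉ F}) :=
          hc (Finset.mem_subtype.mpr hxG)
        simp at hm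
    · -- bergman chain
      intro A hA B hB
      obtain ⟨G, hG, rfl⟩ := Finset.mem_image.mp hA
      obtain ⟨G', hG', rfl⟩ := Finset.mem_image.mp hB
      rcases hchain G (Finset.mem_filter.mp hG).1 G' (Finset.mem_filter.mp hG').1 with h | h
      · exact Or.inl (Finset.subtype_mono h)
      · exact Or.inr (Finset.subtype_mono h)
    · -- image equality
      have himgI : I.image (linkPhi F ∘ Sum.inl) = I'.image (Sum.inl ∘ Sum.inl) := by
        ext w
        simp only [Finset.mem_image, Function.comp_apply]
        constructor
        · rintro ⟨i, hi, rfl⟩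
          exact ⟨⟨i, hIF i hi⟩, Finset.mem_subtype.mpr hi, (linkPhi_inl (hIF i hi)).symm⟩
        · rintro ⟨x, hx, rfl⟩
          exact ⟨x.val, Finset.mem_subtype.mp hx, linkPhi_inl x.2⟩
      have himgCl : Cl.image (linkPhi F ∘ Sum.inr)
          = Cl.image ((Sum.inl ∘ Sum.inr) ∘ fun G => G.subtype (· ∈ F)) := by
        refine Finset.image_congr fun G hG => ?_
        show linkPhi F (Sum.inr G) = Sum.inl (Sum.inr (G.subtype (· ∈ F)))
        exact linkPhi_low (Finset.mem_filter.mp hG).2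
      have himgCh : Ch.image (linkPhi F ∘ Sum.inr)
          = Ch.image (Sum.inr ∘ fun G => G.subtype (· ∉ F)) := by
        refine Finset.image_congr fun G hG => ?_
        show linkPhi F (Sum.inr G) = Sum.inr (G.subtype (· ∉ F))
        exact linkPhi_high (Finset.mem_filter.mp hG).2
      rw [← hCsplit]
      simp only [Finset.image_union, Finset.image_image]
      rw [himgI, himgCl, himgCh, Finset.union_assoc]
      rfl
  · -- injective on the family of faces
    have key : ∀ s ∈ faceLink f.augBergman (Sum.inr F),
        (s.image (linkPhi F)).image (linkPsi F) = s := by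
      intro s hs
      rw [f.mem_link_iff ⟨hFflat, hFne⟩] at hs
      obtain ⟨I, C, rfl, hind, hFC, hflat, hchain, hcomp, hclF, hclC⟩ := hs
      have hIF : ∀ i ∈ I, i ∈ F := fun i hi => hclF (f.subset_cl I hi)
      rw [Finset.image_image]
      have hid : ∀ v ∈ I.image Sum.inl ∪ C.image Sum.inr,
          (linkPsi F ∘ linkPhi F) v = id v := by
        intro v hv
        rcases decode I C v hv with ⟨i, hi, rfl⟩ | ⟨G, hG, rfl⟩
        · show linkPsi F (linkPhi F (Sum.inl i)) = Sum.inl i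
          rw [linkPhi_inl (hIF i hi)]
          rfl
        · by_cases hGF : G ⊆ F
          · show linkPsi F (linkPhi F (Sum.inr G)) = Sum.inr G
            rw [linkPhi_low hGF]
            show Sum.inr ((G.subtype (· ∈ F)).image Subtype.val) = Sum.inr G
            rw [subtype_val_image, Finset.filter_true_of_mem hGF]
          · have hFG : F ⊆ G := (hcomp G hG).resolve_left hGF
            show linkPsi F (linkPhi F (Sum.inr G)) = Sum.inr G
            rw [linkPhi_high hGF]
            show Sum.inr ((G.subtype (· ∉ F)).image Subtype.val ∪ F) = Sum.inr G
            rw [subtype_val_image, filter_not_union_self hFG]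
      rw [Finset.image_congr hid, Finset.image_id]
    intro s t hs ht h
    rw [← key s hs, ← key t ht, h]
  · -- surjective on faces
    rintro t ⟨a, ha, b, hb, rfl⟩
    obtain ⟨I', C'', rfl, hind', hflat', hchain', hcl'⟩ := ha
    obtain ⟨hbflat, hbchain⟩ := hb
    set I := I'.image Subtype.val with hI
    set Cl := C''.image (fun G' => G'.image Subtype.val) with hCldef
    set Ch := b.image (fun A => A.image Subtype.val ∪ F) with hChdef
    have hIF : ∀ i ∈ I, i ∈ F := by
      intro i hi
      rw [hI] at hi
      obtain ⟨x, _, rfl⟩ := Finset.mem_image.mp hi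
      exact x.2
    have hclIF : f.cl I ⊆ F := by
      have h1 := f.cl_mono (show I ⊆ F from fun i hi => hIF i hi)
      rwa [hFflat] at h1
    have hClfact : ∀ G ∈ Cl, G ⊆ F ∧ G ≠ F ∧ f.IsProperFlat G ∧ f.cl I ⊆ G := by
      intro G hG
      rw [hCldef] at hG
      obtain ⟨G', hG', rfl⟩ := Finset.mem_image.mp hG
      have hGF : G'.image Subtype.val ⊆ F := by
        intro x hx
        obtain ⟨y, _, rfl⟩ := Finset.mem_image.mp hx
        exact y.2
      have hflatG' := hflat' G' hG'
      have hkey : (f.cl (G'.image Subtype.val)).subtype (· ∈ F) = G' := hflatG'.1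
      have hclsub : f.cl (G'.image Subtype.val) ⊆ F := by
        have h1 := f.cl_mono hGF
        rwa [hFflat] at h1
      have hflatG : f.cl (G'.image Subtype.val) = G'.image Subtype.val := by
        have h2 := congrArg (Finset.image Subtype.val) hkey
        rwa [subtype_val_image, Finset.filter_true_of_mem hclsub] at h2
      refine ⟨hGF, ?_, ⟨hflatG, ?_⟩, ?_⟩
      · obtain ⟨x, hx⟩ : ∃ x : {x // x ∈ F}, x ∉ G' := by
          by_contra h
          push_neg at h
          exact hflatG'.2 (Finset.eq_univ_iff_forall.mpr h)
        intro hc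
        have hm : x.val ∈ G'.image Subtype.val := by rw [hc]; exact x.2
        exact hx (Subtype.val_injective.mem_finset_image.mp hm)
      · intro hc
        refine hFne (Finset.eq_univ_iff_forall.mpr fun x => hGF ?_)
        rw [hc]; exact Finset.mem_univ x
      · intro x hx
        have hxF : x ∈ F := hclIF hx
        have hsub : (f.cl (I'.image Subtype.val)).subtype (· ∈ F) ⊆ G' := hcl' G' hG'
        have hm : (⟨x, hxF⟩ : {x // x ∈ F}) ∈ G' :=
          hsub (Finset.mem_subtype.mpr (hI ▸ hx))
        exact Finset.mem_image_of_mem Subtype.val hm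
    have hChfact : ∀ G ∈ Ch, F ⊆ G ∧ G ≠ F ∧ f.IsProperFlat G := by
      intro G hG
      rw [hChdef] at hG
      obtain ⟨A, hA, rfl⟩ := Finset.mem_image.mp hG
      obtain ⟨⟨hAflat, hAuniv⟩, hAcl⟩ := hbflat A hA
      have hAne : A.Nonempty := by
        obtain ⟨x, hx1, _⟩ := Finset.exists_of_ssubset (hclEmpty ▸ hAcl)
        exact ⟨x, hx1⟩
      have hGsub : (f.cl (A.image Subtype.val ∪ F)).subtype (· ∉ F) = A := hAflat
      have hGflat : f.cl (A.image Subtype.val ∪ F) = A.image Subtype.val ∪ F := by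
        refine Finset.Subset.antisymm ?_ (f.subset_cl _)
        intro x hx
        by_cases hxF : x ∈ F
        · exact Finset.mem_union_right _ hxF
        · have hm : (⟨x, hxF⟩ : {x // x ∉ F}) ∈ A := by
            rw [← hGsub]
            exact Finset.mem_subtype.mpr hx
          exact Finset.mem_union_left _ (Finset.mem_image_of_mem Subtype.val hm)
      refine ⟨Finset.subset_union_right, ?_, hGflat, ?_⟩
      · obtain ⟨x, hx⟩ := hAne
        intro hc
        have hxval : x.val ∈ A.image Subtype.val ∪ F :=
          Finset.mem_union_left _ (Finset.mem_image_of_mem _ hx)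
        rw [hc] at hxval
        exact x.2 hxval
      · intro hc
        obtain ⟨y, hy⟩ : ∃ y : {x // x ∉ F}, y ∉ A := by
          by_contra h
          push_neg at h
          exact hAuniv (Finset.eq_univ_iff_forall.mpr h)
        have hm : y.val ∈ A.image Subtype.val ∪ F := by
          rw [hc]; exact Finset.mem_univ _
        rcases Finset.mem_union.mp hm with h | h
        · exact hy (Subtype.val_injective.mem_finset_image.mp h)
        · exact y.2 h
    refine ⟨I.image Sum.inl ∪ (Cl ∪ Ch).image Sum.inr,
      (f.mem_link_iff ⟨hFflat, hFne⟩ _).mpr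
        ⟨I, Cl ∪ Ch, rfl, ?_, ?_, ?_, ?_, ?_, hclIF, ?_⟩, ?_⟩
    · -- Indep I
      intro i hi
      have hi' := hi
      rw [hI] at hi'
      obtain ⟨x, hx, rfl⟩ := Finset.mem_image.mp hi'
      have h0 : (f.cl ((I'.erase x).image Subtype.val)).subtype (· ∈ F)
          ⊂ (f.cl (I'.image Subtype.val)).subtype (· ∈ F) := hind' x hx
      have e1 : (I'.erase x).image Subtype.val = I.erase x.val := by
        rw [Finset.image_erase Subtype.val_injective, ← hI]
      rw [e1, ← hI] at h0
      exact ssubset_of_subtype_ssubset (f.cl_mono (Finset.erase_subset _ _)) h0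
    · -- F ∉ Cl ∪ Ch
      intro hc
      rcases Finset.mem_union.mp hc with h | h
      · exact (hClfact F h).2.1 rfl
      · exact (hChfact F h).2.1 rfl
    · -- proper flats
      intro G hG
      rcases Finset.mem_union.mp hG with h | h
      · exact (hClfact G h).2.2.1
      · exact (hChfact G h).2.2
    · -- chain
      intro G hG G' hG'
      rcases Finset.mem_union.mp hG with h | h <;> rcases Finset.mem_union.mp hG' with h' | h'
      · rw [hCldef] at h h'
        obtain ⟨A1, hA1, rfl⟩ := Finset.mem_image.mp h
        obtain ⟨A2, hA2, rfl⟩ := Finset.mem_image.mp h'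
        rcases hchain' A1 hA1 A2 hA2 with hh | hh
        · exact Or.inl (Finset.image_subset_image hh)
        · exact Or.inr (Finset.image_subset_image hh)
      · exact Or.inl ((hClfact G h).1.trans (hChfact G' h').1)
      · exact Or.inr ((hClfact G' h').1.trans (hChfact G h).1)
      · rw [hChdef] at h h'
        obtain ⟨A1, hA1, rfl⟩ := Finset.mem_image.mp h
        obtain ⟨A2, hA2, rfl⟩ := Finset.mem_image.mp h'
        rcases hbchain A1 hA1 A2 hA2 with hh | hh
        · exact Or.inl (Finset.union_subset_union_left (Finset.image_subset_image hh))
        · exact Or.inr (Finset.union_subset_union_left (Finset.image_subset_image hh))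
    · -- comparability with F
      intro G hG
      rcases Finset.mem_union.mp hG with h | h
      · exact Or.inl (hClfact G h).1
      · exact Or.inr (hChfact G h).1
    · -- closure containment
      intro G hG
      rcases Finset.mem_union.mp hG with h | h
      · exact (hClfact G h).2.2.2
      · exact hclIF.trans (hChfact G h).1
    · -- image equality
      have himgI : I.image (linkPhi F ∘ Sum.inl) = I'.image (Sum.inl ∘ Sum.inl) := by
        rw [hI, Finset.image_image]
        exact Finset.image_congr fun x _ => linkPhi_inl x.2
      have himgCl : Cl.image (linkPhi F ∘ Sum.inr) = C''.image (Sum.inl ∘ Sum.inr) := by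
        rw [hCldef, Finset.image_image]
        refine Finset.image_congr fun G' _ => ?_
        show linkPhi F (Sum.inr (G'.image Subtype.val)) = Sum.inl (Sum.inr G')
        have hsub : G'.image Subtype.val ⊆ F := by
          intro x hx
          obtain ⟨y, _, rfl⟩ := Finset.mem_image.mp hx
          exact y.2
        rw [linkPhi_low hsub, subtype_of_image_val]
      have himgCh : Ch.image (linkPhi F ∘ Sum.inr) = b.image Sum.inr := by
        rw [hChdef, Finset.image_image]
        refine Finset.image_congr fun A hA => ?_
        show linkPhi F (Sum.inr (A.image Subtype.val ∪ F)) = Sum.inr A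
        have hAne : A.Nonempty := by
          obtain ⟨x, hx1, _⟩ := Finset.exists_of_ssubset (hclEmpty ▸ (hbflat A hA).2)
          exact ⟨x, hx1⟩
        have hGF : ¬ (A.image Subtype.val ∪ F) ⊆ F := by
          intro hc
          obtain ⟨x, hx⟩ := hAne
          exact x.2 (hc (Finset.mem_union_left _ (Finset.mem_image_of_mem _ hx)))
        rw [linkPhi_high hGF]
        congr 1
        ext x
        simp only [Finset.mem_subtype, Finset.mem_union]
        constructor
        · rintro (h | h)
          · exact Subtype.val_injective.mem_finset_image.mp h
          · exact absurd h x.2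
        · intro h
          exact Or.inl (Finset.mem_image_of_mem _ h)
      simp only [Finset.image_union, Finset.image_image]
      rw [himgI, himgCl, himgCh, Finset.union_assoc]
end

section
/- Let M be a matroid on a finite ground set E, let L be a nonempty upper-set of proper flats of M, and let F_0 be a minimal element of L. Then the link of x_{F_0} in Δ_M(L) is isomorphic to the join I(M|_{F_0}) ∗ Δ(M/F_0) of the independence complex of the restriction M|_{F_0} with the Bergman complex of the contraction M/F_0. -/
open Finset

/-! ## Auxiliary lemmas for Statement 6 -/

namespace LinkIsoAux

open ClosureOp

variable {E : Type*} [Fintype E] [DecidableEq E]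

lemma image_val_subtype (p : E → Prop) [DecidablePred p] (s : Finset E) :
    (s.subtype p).image Subtype.val = s.filter p := by
  ext x; simp [Finset.mem_subtype, and_comm]

lemma subtype_image_val {p : E → Prop} [DecidablePred p] (b : Finset {x // p x}) :
    (b.image Subtype.val).subtype p = b := by
  ext ⟨x, hx⟩
  simp only [Finset.mem_subtype, Finset.mem_image, Subtype.exists, exists_and_right,
    exists_eq_right]
  exact ⟨fun ⟨_, h⟩ => h, fun h => ⟨hx, h⟩⟩

lemma subtype_ssubset_of {p : E → Prop} [DecidablePred p] {X Y : Finset E} (h : X ⊂ Y)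
    (hY : ∀ y ∈ Y, p y) : X.subtype p ⊂ Y.subtype p := by
  obtain ⟨y, hyY, hyX⟩ := Finset.ssubset_iff_of_subset h.subset |>.mp h
  refine Finset.ssubset_iff_of_subset (Finset.subtype_mono h.subset) |>.mpr ?_
  exact ⟨⟨y, hY y hyY⟩, Finset.mem_subtype.mpr hyY, fun hc => hyX (Finset.mem_subtype.mp hc)⟩

lemma ssubset_of_subtype_ssubset {p : E → Prop} [DecidablePred p] {X Y : Finset E}
    (hs : X.subtype p ⊂ Y.subtype p) (hXY : X ⊆ Y) : X ⊂ Y := by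
  obtain ⟨⟨y, hy⟩, hyY, hyX⟩ := Finset.ssubset_iff_of_subset hs.subset |>.mp hs
  exact Finset.ssubset_iff_of_subset hXY |>.mpr
    ⟨y, Finset.mem_subtype.mp hyY, fun hc => hyX (Finset.mem_subtype.mpr hc)⟩

lemma recover {F0 G : Finset E} (hFG : F0 ⊆ G) :
    G.filter (fun x => x ∉ F0) ∪ F0 = G := by
  ext x
  simp only [Finset.mem_union, Finset.mem_filter]
  constructor
  · rintro (⟨h, _⟩ | h)
    · exact h
    · exact hFG h
  · intro h
    by_cases hx : x ∈ F0
    · exact Or.inr hx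
    · exact Or.inl ⟨h, hx⟩

lemma subtype_eq_of_superset {F0 G G' : Finset E} (hG : F0 ⊆ G) (hG' : F0 ⊆ G')
    (h : G.subtype (fun x => x ∉ F0) = G'.subtype (fun x => x ∉ F0)) : G = G' := by
  have h2 := congrArg (Finset.image Subtype.val) h
  rw [image_val_subtype, image_val_subtype] at h2
  rw [← recover hG, h2, recover hG']

lemma subtype_union_val {F0 : Finset E} (G' : Finset {x // x ∉ F0}) :
    (G'.image Subtype.val ∪ F0).subtype (fun x => x ∉ F0) = G' := by
  ext ⟨x, hx⟩
  simp only [Finset.mem_subtype, Finset.mem_union, Finset.mem_image, Subtype.exists,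
    exists_and_right, exists_eq_right]
  constructor
  · rintro (⟨_, h⟩ | h)
    · exact h
    · exact absurd h hx
  · intro h
    exact Or.inl ⟨hx, h⟩

lemma subtype_univ_iff {F0 G : Finset E} (hFG : F0 ⊆ G) :
    G.subtype (fun x => x ∉ F0) = Finset.univ ↔ G = Finset.univ := by
  constructor
  · intro h
    ext x
    simp only [Finset.mem_univ, iff_true]
    by_cases hx : x ∈ F0
    · exact hFG hx
    · have : (⟨x, hx⟩ : {x // x ∉ F0}) ∈ G.subtype (fun x => x ∉ F0) := by
        rw [h]; exact Finset.mem_univ _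
      exact Finset.mem_subtype.mp this
  · rintro rfl
    ext ⟨x, hx⟩
    simp [Finset.mem_subtype]

lemma union_inl_inr_inj {α β : Type*} [DecidableEq α] [DecidableEq β]
    {a a' : Finset α} {b b' : Finset β}
    (h : a.image Sum.inl ∪ b.image Sum.inr = a'.image Sum.inl ∪ b'.image Sum.inr) :
    a = a' ∧ b = b' := by
  constructor
  · ext x
    have := Finset.ext_iff.mp h (Sum.inl x)
    simpa using this
  · ext x
    have := Finset.ext_iff.mp h (Sum.inr x)
    simpa using this

end LinkIsoAux

namespace LinkIsoAux2
open ClosureOp LinkIsoAux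

set_option linter.unusedSectionVars false

variable {E : Type*} [Fintype E] [DecidableEq E]

lemma restrict_cl (f : ClosureOp E) (F0 : Finset E) (A : Finset {x // x ∈ F0}) :
    (f.restrict F0).cl A = (f.cl (A.image Subtype.val)).subtype (· ∈ F0) := rfl

lemma contract_cl (f : ClosureOp E) (F0 : Finset E) (A : Finset {x // x ∉ F0}) :
    (f.contract F0).cl A = (f.cl (A.image Subtype.val ∪ F0)).subtype (· ∉ F0) := rfl

lemma restrict_indep_iff (f : ClosureOp E) {F0 I : Finset E} (hflat : f.cl F0 = F0)
    (hI : I ⊆ F0) : (f.restrict F0).Indep (I.subtype (· ∈ F0)) ↔ f.Indep I := by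
  have hIm : (I.subtype (· ∈ F0)).image Subtype.val = I := by
    rw [image_val_subtype, Finset.filter_true_of_mem hI]
  have hclI : f.cl I ⊆ F0 := hflat ▸ f.cl_mono hI
  have herase : ∀ (i : E) (h : i ∈ F0),
      ((I.subtype (· ∈ F0)).erase ⟨i, h⟩).image Subtype.val = I.erase i := by
    intro i h
    rw [Finset.image_erase Subtype.val_injective, hIm]
  constructor
  · intro h i hi
    have hx : (⟨i, hI hi⟩ : {x // x ∈ F0}) ∈ I.subtype (· ∈ F0) := Finset.mem_subtype.mpr hi
    have h2 := h _ hx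
    rw [restrict_cl, restrict_cl, herase, hIm] at h2
    exact ssubset_of_subtype_ssubset h2 (f.cl_mono (Finset.erase_subset _ _))
  · rintro h ⟨i, hiF⟩ hx
    have hiI : i ∈ I := Finset.mem_subtype.mp hx
    rw [restrict_cl, restrict_cl, herase, hIm]
    exact subtype_ssubset_of (h i hiI) (fun y hy => hclI hy)

lemma contract_flat (f : ClosureOp E) {F0 G : Finset E} (hflat : f.cl G = G)
    (hFG : F0 ⊆ G) :
    (f.contract F0).cl (G.subtype (fun x => x ∉ F0)) = G.subtype (fun x => x ∉ F0) := by
  rw [contract_cl, image_val_subtype, recover hFG, hflat]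

lemma contract_cl_empty (f : ClosureOp E) {F0 : Finset E} (hflat : f.cl F0 = F0) :
    (f.contract F0).cl ∅ = ∅ := by
  rw [contract_cl]
  simp only [Finset.image_empty, Finset.empty_union, hflat]
  ext ⟨x, hx⟩
  simp [Finset.mem_subtype, hx]

lemma contract_flat_reverse (f : ClosureOp E) {F0 : Finset E}
    {G' : Finset {x // x ∉ F0}}
    (h : (f.contract F0).cl G' = G') :
    f.cl (G'.image Subtype.val ∪ F0) = G'.image Subtype.val ∪ F0 := by
  rw [contract_cl] at h
  apply Finset.Subset.antisymm
  · intro x hx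
    by_cases hxF : x ∈ F0
    · exact Finset.mem_union_right _ hxF
    · have : (⟨x, hxF⟩ : {x // x ∉ F0}) ∈ G' := by
        rw [← h]
        exact Finset.mem_subtype.mpr hx
      exact Finset.mem_union_left _ (Finset.mem_image_of_mem _ this)
  · exact f.subset_cl _

end LinkIsoAux2

namespace LinkIsoAux3
open ClosureOp LinkIsoAux LinkIsoAux2

set_option linter.unusedSectionVars false

variable {E : Type*} [Fintype E] [DecidableEq E]

/-- The vertex map of the isomorphism. -/
def linkPhi (F0 : Finset E) : E ⊕ Finset E → {x // x ∈ F0} ⊕ Finset {x // x ∉ F0}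
  | Sum.inl i => if h : i ∈ F0 then Sum.inl ⟨i, h⟩ else Sum.inr ∅
  | Sum.inr G => Sum.inr (G.subtype (fun x => x ∉ F0))

lemma linkPhi_inl {F0 : Finset E} {i : E} (h : i ∈ F0) :
    linkPhi F0 (Sum.inl i) = Sum.inl ⟨i, h⟩ := by
  simp [linkPhi, h]

lemma linkPhi_inr (F0 : Finset E) (G : Finset E) :
    linkPhi F0 (Sum.inr G) = Sum.inr (G.subtype (fun x => x ∉ F0)) := rfl

lemma image_linkPhi (F0 : Finset E) (I : Finset E) (C : Finset (Finset E)) (hI : I ⊆ F0) :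
    (I.image Sum.inl ∪ C.image Sum.inr).image (linkPhi F0)
      = ((I.subtype (· ∈ F0)).image Sum.inl)
        ∪ ((C.image (fun G => G.subtype (fun x => x ∉ F0))).image Sum.inr) := by
  rw [Finset.image_union, Finset.image_image, Finset.image_image]
  congr 1
  · ext x
    simp only [Finset.mem_image, Function.comp_apply, Finset.mem_subtype, Subtype.exists]
    constructor
    · rintro ⟨i, hi, rfl⟩
      rw [linkPhi_inl (hI hi)]
      exact ⟨i, hI hi, hi, rfl⟩
    · rintro ⟨i, hiF, hiI, rfl⟩
      exact ⟨i, hiI, linkPhi_inl hiF⟩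
  · ext x
    simp only [Finset.mem_image, Function.comp_apply]
    constructor
    · rintro ⟨G, hG, rfl⟩
      exact ⟨G.subtype _, ⟨G, hG, rfl⟩, rfl⟩
    · rintro ⟨H, ⟨G, hG, rfl⟩, rfl⟩
      exact ⟨G, hG, rfl⟩

/-- Characterization of faces of the link of `x_{F0}`. -/
lemma mem_link_iff (f : ClosureOp E) (L : Set (Finset E))
    (hL : f.IsFlatUpperSet L) (F0 : Finset E) (hF0 : F0 ∈ L)
    (hmin : ∀ F ∈ L, F ⊆ F0 → F = F0) (s : Finset (E ⊕ Finset E)) :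
    s ∈ faceLink (f.augBergmanOn L) (Sum.inr F0) ↔
      ∃ (I : Finset E) (C : Finset (Finset E)), s = I.image Sum.inl ∪ C.image Sum.inr ∧ I ⊆ F0 ∧ f.Indep I ∧
        (∀ G ∈ C, G ∈ L ∧ f.IsProperFlat G ∧ F0 ⊂ G) ∧
        (∀ G ∈ C, ∀ G' ∈ C, G ⊆ G' ∨ G' ⊆ G) := by
  obtain ⟨hflat, hne⟩ := hL.1 F0 hF0
  constructor
  · rintro ⟨hns, ⟨I, C₀, heq, hindep, hproper, hchain, hclsub⟩, hLmem⟩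
    have hF0C : F0 ∈ C₀ := by
      have h1 : Sum.inr F0 ∈ I.image Sum.inl ∪ C₀.image Sum.inr := by
        rw [← heq]; exact Finset.mem_insert_self _ _
      rcases Finset.mem_union.mp h1 with h | h
      · obtain ⟨i, _, hi⟩ := Finset.mem_image.mp h
        exact absurd hi (by simp)
      · obtain ⟨G, hG, hGe⟩ := Finset.mem_image.mp h
        exact (Sum.inr_injective hGe) ▸ hG
    have hclF0 : f.cl I ⊆ F0 := hclsub F0 hF0C
    have hs : s = I.image Sum.inl ∪ (C₀.erase F0).image Sum.inr := by
      rw [← Finset.erase_insert hns, heq, Finset.erase_union_distrib,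
        Finset.erase_eq_of_notMem (by simp), Finset.image_erase Sum.inr_injective]
    refine ⟨I, C₀.erase F0, hs, fun i hi => hclF0 (f.subset_cl I hi), hindep, ?_, ?_⟩
    · intro G hG
      have hGC : G ∈ C₀ := Finset.mem_of_mem_erase hG
      have hGne : G ≠ F0 := Finset.ne_of_mem_erase hG
      have hGL : G ∈ L := by
        apply hLmem
        rw [heq]
        exact Finset.mem_union_right _ (Finset.mem_image_of_mem _ hGC)
      refine ⟨hGL, hproper G hGC, ?_⟩
      rcases hchain F0 hF0C G hGC with h | h
      · exact lt_of_le_of_ne h (Ne.symm hGne)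
      · exact absurd (hmin G hGL h) hGne
    · intro G hG G' hG'
      exact hchain G (Finset.mem_of_mem_erase hG) G' (Finset.mem_of_mem_erase hG')
  · rintro ⟨I, C, hs, hIF0, hindep, hCprop, hchain⟩
    have hclI : f.cl I ⊆ F0 := hflat ▸ f.cl_mono hIF0
    have hns : Sum.inr F0 ∉ s := by
      rw [hs]
      intro h
      rcases Finset.mem_union.mp h with h | h
      · obtain ⟨i, _, hi⟩ := Finset.mem_image.mp h
        exact absurd hi (by simp)
      · obtain ⟨G, hG, hGe⟩ := Finset.mem_image.mp h
        have hGF : G = F0 := Sum.inr_injective hGe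
        exact (lt_irrefl F0) (hGF ▸ (hCprop G hG).2.2)
    refine ⟨hns, ⟨I, insert F0 C, ?_, hindep, ?_, ?_, ?_⟩, ?_⟩
    · rw [hs, Finset.image_insert, Finset.union_insert]
    · intro G hG
      rcases Finset.mem_insert.mp hG with hGe | hG
      · rw [hGe]; exact hL.1 F0 hF0
      · exact (hCprop G hG).2.1
    · intro G hG G' hG'
      rcases Finset.mem_insert.mp hG with hGe | hG
      · rcases Finset.mem_insert.mp hG' with hG'e | hG'
        · exact Or.inl (by rw [hGe, hG'e])
        · exact Or.inl (by rw [hGe]; exact (hCprop G' hG').2.2.subset)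
      · rcases Finset.mem_insert.mp hG' with hG'e | hG'
        · exact Or.inr (by rw [hG'e]; exact (hCprop G hG).2.2.subset)
        · exact hchain G hG G' hG'
    · intro G hG
      rcases Finset.mem_insert.mp hG with hGe | hG
      · rw [hGe]; exact hclI
      · exact hclI.trans (hCprop G hG).2.2.subset
    · intro F hF
      rcases Finset.mem_insert.mp hF with h | h
      · exact (Sum.inr_injective h) ▸ hF0
      · rw [hs] at h
        rcases Finset.mem_union.mp h with h | h
        · obtain ⟨i, _, hi⟩ := Finset.mem_image.mp h
          exact absurd hi (by simp)
        · obtain ⟨G, hG, hGe⟩ := Finset.mem_image.mp h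
          exact (Sum.inr_injective hGe) ▸ (hCprop G hG).1

end LinkIsoAux3

namespace LinkIsoAux3

set_option linter.unusedSectionVars false

open ClosureOp LinkIsoAux LinkIsoAux2

variable {E : Type*} [Fintype E] [DecidableEq E]

theorem aux_main (f : ClosureOp E) (L : Set (Finset E))
    (hL : f.IsFlatUpperSet L) (F0 : Finset E) (hF0 : F0 ∈ L)
    (hmin : ∀ F ∈ L, F ⊆ F0 → F = F0) :
    ComplexIso (faceLink (f.augBergmanOn L) (Sum.inr F0))
      (complexJoin (f.restrict F0).indepComplex ((f.contract F0).bergman)) := by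
  obtain ⟨hflat, hneuniv⟩ := hL.1 F0 hF0
  refine ⟨linkPhi F0, ?_, ?_, ?_, ?_⟩
  · -- injective on faces
    intro s hs
    obtain ⟨I, C, hseq, hIF0, -, hCprop, -⟩ := (mem_link_iff f L hL F0 hF0 hmin s).mp hs
    have hmem : ∀ x ∈ s, (∃ i, x = Sum.inl i ∧ i ∈ F0) ∨ (∃ G, x = Sum.inr G ∧ F0 ⊆ G) := by
      intro x hx
      rw [hseq] at hx
      rcases Finset.mem_union.mp hx with h | h
      · obtain ⟨i, hi, rfl⟩ := Finset.mem_image.mp h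
        exact Or.inl ⟨i, rfl, hIF0 hi⟩
      · obtain ⟨G, hG, rfl⟩ := Finset.mem_image.mp h
        exact Or.inr ⟨G, rfl, (hCprop G hG).2.2.subset⟩
    intro x hx y hy hxy
    rcases hmem x (Finset.mem_coe.mp hx) with ⟨i, rfl, hiF⟩ | ⟨G, rfl, hGF⟩ <;>
      rcases hmem y (Finset.mem_coe.mp hy) with ⟨j, rfl, hjF⟩ | ⟨G', rfl, hG'F⟩
    · rw [linkPhi_inl hiF, linkPhi_inl hjF] at hxy
      exact congrArg Sum.inl (Subtype.ext_iff.mp (Sum.inl_injective hxy))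
    · rw [linkPhi_inl hiF, linkPhi_inr] at hxy
      exact absurd hxy (by simp)
    · rw [linkPhi_inl hjF, linkPhi_inr] at hxy
      exact absurd hxy (by simp)
    · rw [linkPhi_inr, linkPhi_inr] at hxy
      exact congrArg Sum.inr (subtype_eq_of_superset hGF hG'F (Sum.inr_injective hxy))
  · -- images of faces are faces
    intro s hs
    obtain ⟨I, C, hseq, hIF0, hindep, hCprop, hchain⟩ :=
      (mem_link_iff f L hL F0 hF0 hmin s).mp hs
    rw [hseq, image_linkPhi F0 I C hIF0]
    refine ⟨I.subtype (· ∈ F0), (restrict_indep_iff f hflat hIF0).mpr hindep,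
      C.image (fun G => G.subtype (fun x => x ∉ F0)), ⟨?_, ?_⟩, rfl⟩
    · rintro H hH
      obtain ⟨G, hG, rfl⟩ := Finset.mem_image.mp hH
      obtain ⟨hGL, ⟨hGflat, hGuniv⟩, hF0G⟩ := hCprop G hG
      refine ⟨⟨contract_flat f hGflat hF0G.subset, ?_⟩, ?_⟩
      · intro hcontra
        exact hGuniv ((subtype_univ_iff hF0G.subset).mp hcontra)
      · rw [contract_cl_empty f hflat]
        obtain ⟨y, hyG, hyF⟩ := Finset.ssubset_iff_of_subset hF0G.subset |>.mp hF0G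
        refine Finset.ssubset_iff_of_subset (Finset.empty_subset _) |>.mpr ?_
        exact ⟨⟨y, hyF⟩, Finset.mem_subtype.mpr hyG, Finset.notMem_empty _⟩
    · rintro H hH H' hH'
      obtain ⟨G, hG, rfl⟩ := Finset.mem_image.mp hH
      obtain ⟨G', hG', rfl⟩ := Finset.mem_image.mp hH'
      rcases hchain G hG G' hG' with h | h
      · exact Or.inl (Finset.subtype_mono h)
      · exact Or.inr (Finset.subtype_mono h)
  · -- images determine faces
    intro s t hs ht himg
    obtain ⟨I, C, hseq, hIF0, -, hCprop, -⟩ := (mem_link_iff f L hL F0 hF0 hmin s).mp hs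
    obtain ⟨I', C', hteq, hI'F0, -, hC'prop, -⟩ := (mem_link_iff f L hL F0 hF0 hmin t).mp ht
    rw [hseq, hteq, image_linkPhi F0 I C hIF0, image_linkPhi F0 I' C' hI'F0] at himg
    obtain ⟨ha, hb⟩ := union_inl_inr_inj himg
    have hI : I = I' := by
      have h2 := congrArg (Finset.image Subtype.val) ha
      rwa [image_val_subtype, image_val_subtype, Finset.filter_true_of_mem hIF0,
        Finset.filter_true_of_mem hI'F0] at h2
    have key : ∀ (D : Finset (Finset E)), (∀ G ∈ D, F0 ⊆ G) →
        (D.image (fun G => G.subtype (fun x => x ∉ F0))).image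
          (fun H => H.image Subtype.val ∪ F0) = D := by
      intro D hD
      rw [Finset.image_image]
      refine (Finset.image_congr ?_).trans Finset.image_id
      intro G hG
      show (G.subtype (fun x => x ∉ F0)).image Subtype.val ∪ F0 = G
      rw [image_val_subtype, recover (hD G hG)]
    have hC : C = C' := by
      rw [← key C (fun G hG => (hCprop G hG).2.2.subset), hb,
        key C' (fun G hG => (hC'prop G hG).2.2.subset)]
    rw [hseq, hteq, hI, hC]
  · -- surjectivity
    rintro t ⟨a, ha, b, hb, rfl⟩
    obtain ⟨hbflats, hbchain⟩ := hb
    set I := a.image Subtype.val with hIdef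
    set C := b.image (fun G' => G'.image Subtype.val ∪ F0) with hCdef
    have hIF0 : I ⊆ F0 := by
      intro x hx
      obtain ⟨⟨y, hy⟩, -, rfl⟩ := Finset.mem_image.mp hx
      exact hy
    have hsub : I.subtype (· ∈ F0) = a := subtype_image_val a
    refine ⟨I.image Sum.inl ∪ C.image Sum.inr, ?_, ?_⟩
    · apply (mem_link_iff f L hL F0 hF0 hmin _).mpr
      refine ⟨I, C, rfl, hIF0, (restrict_indep_iff f hflat hIF0).mp (hsub ▸ ha), ?_, ?_⟩
      · intro G hG
        obtain ⟨G', hG', rfl⟩ := Finset.mem_image.mp hG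
        obtain ⟨⟨hG'flat, hG'univ⟩, hG'pos⟩ := hbflats G' hG'
        have hGflat : f.cl (G'.image Subtype.val ∪ F0) = G'.image Subtype.val ∪ F0 :=
          contract_flat_reverse f hG'flat
        have hF0G : F0 ⊂ G'.image Subtype.val ∪ F0 := by
          refine Finset.ssubset_iff_of_subset Finset.subset_union_right |>.mpr ?_
          rw [contract_cl_empty f hflat] at hG'pos
          obtain ⟨⟨y, hyF⟩, hyG', -⟩ :=
            Finset.ssubset_iff_of_subset (Finset.empty_subset _) |>.mp hG'pos
          exact ⟨y, Finset.mem_union_left _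
            (Finset.mem_image_of_mem _ hyG'), hyF⟩
        have hGuniv : G'.image Subtype.val ∪ F0 ≠ Finset.univ := by
          intro hcontra
          apply hG'univ
          rw [← subtype_union_val G', hcontra]
          ext ⟨x, hx⟩
          simp [Finset.mem_subtype, hx]
        exact ⟨hL.2 F0 hF0 _ ⟨hGflat, hGuniv⟩ hF0G.subset, ⟨hGflat, hGuniv⟩, hF0G⟩
      · intro G hG G'' hG''
        obtain ⟨G1, hG1, rfl⟩ := Finset.mem_image.mp hG
        obtain ⟨G2, hG2, rfl⟩ := Finset.mem_image.mp hG''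
        rcases hbchain G1 hG1 G2 hG2 with h | h
        · exact Or.inl (Finset.union_subset_union_left (Finset.image_subset_image h))
        · exact Or.inr (Finset.union_subset_union_left (Finset.image_subset_image h))
    · rw [image_linkPhi F0 I C hIF0, hsub]
      have hCb : C.image (fun G => G.subtype (fun x => x ∉ F0)) = b := by
        rw [hCdef, Finset.image_image]
        refine (Finset.image_congr ?_).trans Finset.image_id
        intro G' hG'
        exact subtype_union_val G'
      rw [hCb]
end LinkIsoAux3


/-- For a matroid `M`, a nonempty upper-set `L` of proper flats and a
minimal element `F₀` of `L`, the link of `x_{F₀}` in `Δ_M(L)` is isomorphic to the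
join `I(M|_{F₀}) ∗ Δ(M/F₀)` of the independence complex of the restriction with the
Bergman complex of the contraction. -/
theorem link_in_augBergmanOn_iso_join
    {E : Type*} [Fintype E] [DecidableEq E] (M : Matroid E) (hE : M.E = Set.univ)
    (L : Set (Finset E)) (hL : (M.closureOp hE).IsFlatUpperSet L)
    (F0 : Finset E) (hF0 : F0 ∈ L) (hmin : ∀ F ∈ L, F ⊆ F0 → F = F0) :
    ComplexIso (faceLink ((M.closureOp hE).augBergmanOn L) (Sum.inr F0))
      (complexJoin ((M.closureOp hE).restrict F0).indepComplex
        (((M.closureOp hE).contract F0).bergman)) := by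
  exact LinkIsoAux3.aux_main (M.closureOp hE) L hL F0 hF0 hmin
end
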